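/- arXiv:2404.19537 — 7 statements merged into one kernel-verified Lean document; each statement's English description precedes it below -/
import Mathlib

section
/- Let G be an r-regular non-complete connected graph on p vertices with adjacency eigenvalues r = λ₁, λ₂, ..., λ_p. Then the eccentricity matrix of the join G ∨ K₁ has eigenvalues (p−r−1) ± √((p−r−1)² + p), each with multiplicity 1, together with −2(λ_i + 1) for i = 2, ..., p. -/
/-!
Every vertex of a non-complete regular graph `G` has a non-neighbour, so in `G ∨ K₁` the vertices
of `G` have eccentricity 2, the apex has eccentricity 1, and
`ε(G ∨ K₁) = [[2(J - I - A), 1], [1ᵀ, 0]]`. Regularity makes the all-ones vector a common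
eigenvector of everything in sight, and a matrix `B` with `B u = s u`, bordered by the column `u`,
satisfies `det [[B, u], [vᵀ, d]] · s = det B · (d s - vᵀ u)` (one column operation). Applied twice,
this shows that adding `2J` to `-2(I + A)` only moves the eigenvalue of the all-ones vector from
`-2(r + 1)` to `c = 2(p - r - 1)`, and that bordering by ones replaces `c` by the two roots of
`x² - c x - p`.
-/

open SimpleGraph Matrix Finset

attribute [local instance] Fintype.ofFinite Classical.propDecidable

noncomputable section

/-- Eccentricity of a vertex: maximum distance to any vertex. -/
def ecc {V : Type*} [Fintype V] (G : SimpleGraph V) (v : V) : ℕ :=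
  Finset.univ.sup (fun w => G.dist v w)

/-- Diameter: maximum eccentricity. -/
def gdiam {V : Type*} [Fintype V] (G : SimpleGraph V) : ℕ :=
  Finset.univ.sup (fun v => ecc G v)

/-- The eccentricity matrix. -/
def eccMatrix {V : Type*} [Fintype V] (G : SimpleGraph V) : Matrix V V ℝ :=
  fun u v => if G.dist u v = min (ecc G u) (ecc G v) then (G.dist u v : ℝ) else 0

/-- Join of two graphs. -/
def joinGraph {V₁ V₂ : Type*} (G₁ : SimpleGraph V₁) (G₂ : SimpleGraph V₂) :
    SimpleGraph (V₁ ⊕ V₂) :=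
  SimpleGraph.fromRel (fun x y =>
    match x, y with
    | Sum.inl a, Sum.inl b => G₁.Adj a b
    | Sum.inr a, Sum.inr b => G₂.Adj a b
    | Sum.inl _, Sum.inr _ => True
    | Sum.inr _, Sum.inl _ => False)

/-- Disjoint union of two graphs. -/
def disjUnion {V₁ V₂ : Type*} (G₁ : SimpleGraph V₁) (G₂ : SimpleGraph V₂) :
    SimpleGraph (V₁ ⊕ V₂) :=
  SimpleGraph.fromRel (fun x y =>
    match x, y with
    | Sum.inl a, Sum.inl b => G₁.Adj a b
    | Sum.inr a, Sum.inr b => G₂.Adj a b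
    | _, _ => False)

/-- Subdivision-vertex join `G₁ ∨̇ G₂`: take the subdivision of `G₁` (original vertices
`V₁`, one new vertex for every edge) and join every original vertex of `G₁` to every
vertex of `G₂`. -/
def subVertexJoin {V₁ V₂ : Type*} (G₁ : SimpleGraph V₁) (G₂ : SimpleGraph V₂) :
    SimpleGraph ((V₁ ⊕ G₁.edgeSet) ⊕ V₂) :=
  SimpleGraph.fromRel (fun x y =>
    match x, y with
    | Sum.inl (Sum.inl v), Sum.inl (Sum.inr e) => v ∈ (e : Sym2 V₁)
    | Sum.inl (Sum.inl _), Sum.inr _ => True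
    | Sum.inr a, Sum.inr b => G₂.Adj a b
    | _, _ => False)

/-- Subdivision-edge join `G₁ ⊻ G₂`: take the subdivision of `G₁` and join every
subdivision (inserted) vertex of `G₁` to every vertex of `G₂`. -/
def subEdgeJoin {V₁ V₂ : Type*} (G₁ : SimpleGraph V₁) (G₂ : SimpleGraph V₂) :
    SimpleGraph ((V₁ ⊕ G₁.edgeSet) ⊕ V₂) :=
  SimpleGraph.fromRel (fun x y =>
    match x, y with
    | Sum.inl (Sum.inl v), Sum.inl (Sum.inr e) => v ∈ (e : Sym2 V₁)
    | Sum.inl (Sum.inr _), Sum.inr _ => True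
    | Sum.inr a, Sum.inr b => G₂.Adj a b
    | _, _ => False)

/-- Line graph: vertices are edges of `G`, adjacent iff they share an endpoint. -/
def lineG {V : Type*} (G : SimpleGraph V) : SimpleGraph G.edgeSet :=
  SimpleGraph.fromRel (fun e f => ∃ v, v ∈ (e : Sym2 V) ∧ v ∈ (f : Sym2 V))

/-- Incidence matrix of a graph. -/
def incMat {V : Type*} [Fintype V] (G : SimpleGraph V) : Matrix V G.edgeSet ℝ :=
  fun v e => if v ∈ (e : Sym2 V) then 1 else 0

/-- All-ones matrix. -/
def Jmat (m n : Type*) : Matrix m n ℝ := Matrix.of (fun _ _ => (1 : ℝ))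

/-- A symmetric matrix is irreducible iff it is not permutation-similar to a
nontrivial block upper-triangular matrix, i.e. there is no nontrivial vertex split
with all cross entries zero. -/
def MatIrreducible {n : Type*} (M : Matrix n n ℝ) : Prop :=
  ∀ S : Set n, S.Nonempty → Sᶜ.Nonempty → ∃ u ∈ S, ∃ v ∈ Sᶜ, M u v ≠ 0

/-- `μ` is an eigenvalue of `M`. -/
def IsEigenvalue {n : Type*} [Fintype n] (M : Matrix n n ℝ) (μ : ℝ) : Prop :=
  ∃ v : n → ℝ, v ≠ 0 ∧ M.mulVec v = μ • v

/-- Eigenspace of `M` for `μ`. -/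
def eigSpace {n : Type*} [Fintype n] (M : Matrix n n ℝ) (μ : ℝ) :
    Submodule ℝ (n → ℝ) :=
  LinearMap.ker (M.mulVecLin - μ • LinearMap.id)

/-- Eccentricity energy: sum of absolute values of the eccentricity eigenvalues. -/
def eccEnergy {V : Type*} [Fintype V] (G : SimpleGraph V) : ℝ :=
  ((eccMatrix G).charpoly.roots.map (fun x => |x|)).sum

/-- Eccentricity Wiener index: half the sum of the entries of the eccentricity matrix. -/
def eccWiener {V : Type*} [Fintype V] (G : SimpleGraph V) : ℝ :=
  (∑ u, ∑ v, eccMatrix G u v) / 2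

end

open Polynomial

namespace Matrix

variable {R : Type*} [CommRing R] {n : Type*} [Fintype n]

theorem add_const_mulVec_one {M : Matrix n n R} {c : R} (hM : M *ᵥ 1 = c • 1) (a : R) :
    (M + of fun _ _ => a) *ᵥ 1 = (c + Fintype.card n * a) • 1 := by
  ext i
  have hMi := congrFun hM i
  simp only [mulVec, dotProduct, Pi.one_apply, mul_one, Pi.smul_apply, smul_eq_mul] at hMi ⊢
  simp [Finset.sum_add_distrib, hMi]

variable [DecidableEq n]

theorem det_fromBlocks_replicate_mul_of_mulVec_eq_smul {B : Matrix n n R} {u : n → R} {s : R}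
    (hB : B *ᵥ u = s • u) (v : n → R) (d : R) :
    (fromBlocks B (replicateCol Unit u) (replicateRow Unit v) (of fun _ _ => d)).det * s =
      B.det * (d * s - v ⬝ᵥ u) := by
  set N := fromBlocks B (replicateCol Unit u) (replicateRow Unit v) (of fun _ _ => d)
  set Q : Matrix (n ⊕ Unit) (n ⊕ Unit) R :=
    fromBlocks 1 (replicateCol Unit (-u)) 0 (of fun _ _ => s)
  have hQ : Q.det = s := by simp [Q, det_fromBlocks_zero₂₁]
  -- `Q` clears the last column of `N` because `B u = s u`
  have hNQ : N * Q = fromBlocks B 0 (replicateRow Unit v) (of fun _ _ => d * s - v ⬝ᵥ u) := by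
    rw [fromBlocks_multiply]
    congr 1
    · simp
    · ext i j
      have hBi := congrFun hB i
      simp only [mulVec, dotProduct, Pi.smul_apply, smul_eq_mul] at hBi
      simp [Matrix.mul_apply, hBi, mul_comm]
    · simp
    · ext
      simp [Matrix.mul_apply, dotProduct, neg_add_eq_sub]
  calc N.det * s = (N * Q).det := by rw [det_mul, hQ]
    _ = _ := by
      rw [hNQ, det_fromBlocks_zero₁₂, det_unique (of fun _ _ => _ : Matrix Unit Unit R)]
      rfl

theorem charmatrix_mulVec_one {M : Matrix n n R} {c : R} (hM : M *ᵥ 1 = c • 1) :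
    charmatrix M *ᵥ 1 = (X - C c) • 1 := by
  ext i
  have hMi := congrFun hM i
  simp only [mulVec, dotProduct, Pi.one_apply, mul_one, Pi.smul_apply, smul_eq_mul] at hMi ⊢
  simp [charmatrix_apply, diagonal_apply, Finset.sum_sub_distrib, ← map_sum, hMi]

theorem charpoly_fromBlocks_replicate_mul {M : Matrix n n R} {c : R} (hM : M *ᵥ 1 = c • 1) :
    (fromBlocks M (replicateCol Unit 1) (replicateRow Unit 1) 0).charpoly * (X - C c) =
      M.charpoly * (X * (X - C c) - (Fintype.card n : R[X])) := by
  have hblocks : charmatrix (fromBlocks M (replicateCol Unit 1) (replicateRow Unit 1) 0) =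
      fromBlocks (charmatrix M) (replicateCol Unit (-1)) (replicateRow Unit (-1))
        (of fun _ _ => X) := by
    rw [charmatrix_fromBlocks, charmatrix_zero]
    congr 1
  have hB : charmatrix M *ᵥ (-1) = (X - C c) • (-1) := by
    rw [mulVec_neg, charmatrix_mulVec_one hM, smul_neg]
  rw [charpoly, hblocks, det_fromBlocks_replicate_mul_of_mulVec_eq_smul hB, charpoly]
  simp [dotProduct]

theorem charpoly_add_const_mul {M : Matrix n n R} {c : R} (hM : M *ᵥ 1 = c • 1) (a : R) :
    (M + of fun _ _ => a).charpoly * (X - C c) =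
      M.charpoly * (X - C (c + Fintype.card n * a)) := by
  have hchar : charmatrix (M + of fun _ _ => a) =
      charmatrix M - replicateCol Unit (1 : n → R[X]) * replicateRow Unit (fun _ => C a) := by
    rw [charmatrix, charmatrix, map_add, sub_add_eq_sub_sub]
    congr 1
    ext
    simp [Matrix.mul_apply]
  have h := det_fromBlocks_replicate_mul_of_mulVec_eq_smul (charmatrix_mulVec_one hM)
    (fun _ => C a) 1
  rw [show (of fun _ _ => (1 : R[X]) : Matrix Unit Unit R[X]) = 1 by ext; simp,
    det_fromBlocks_one₂₂] at h
  rw [charpoly, hchar, h, charpoly, dotProduct_one, sum_const, card_univ, nsmul_eq_mul, C_add,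
    C_mul, map_natCast]
  ring

theorem charpoly_smul_add_scalar {K : Type*} [Field K] [Infinite K] {A : Matrix n n K}
    (hA : A.charpoly.Splits) {a : K} (ha : a ≠ 0) (b : K) :
    (a • A + scalar n b).charpoly =
      ((A.charpoly.roots.map (fun t => a * t + b)).map (X - C ·)).prod := by
  have hcard : Multiset.card A.charpoly.roots = Fintype.card n := by
    rw [splits_iff_card_roots.mp hA, charpoly_natDegree_eq_dim]
  refine Polynomial.funext fun x => ?_
  have hconj : scalar n x - (a • A + scalar n b) = a • (scalar n ((x - b) / a) - A) := by
    ext i j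
    by_cases hij : i = j
    · subst hij
      simp only [scalar_apply, sub_apply, diagonal_apply_eq, add_apply, smul_apply, smul_eq_mul]
      field_simp
      ring
    · simp [hij]
  rw [eval_charpoly, hconj, det_smul, ← eval_charpoly, hA.eval_eq_prod_roots,
    (charpoly_monic A).leadingCoeff, one_mul, eval_multiset_prod, Multiset.map_map, ← hcard,
    ← Multiset.prod_replicate, ← Multiset.map_const', ← Multiset.prod_map_mul, Multiset.map_map]
  refine congrArg _ (Multiset.map_congr rfl fun t _ => ?_)
  simp only [Function.comp_apply, eval_sub, eval_X, eval_C]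
  field_simp
  ring

end Matrix

theorem Matrix.two_smul_Jmat_sub_one_sub {V : Type*} [Fintype V] [DecidableEq V]
    (A : Matrix V V ℝ) :
    2 • (Jmat V V - 1 - A) = ((-2 : ℝ) • A + scalar V (-2)) + of fun _ _ => 2 := by
  ext u v
  simp only [Jmat, smul_apply, sub_apply, add_apply, of_apply, scalar_apply, diagonal_apply,
    one_apply, smul_eq_mul, nsmul_eq_mul]
  split_ifs <;> ring

theorem Polynomial.X_mul_X_sub_C_sub_C_eq {b q : ℝ} (h : 0 ≤ b ^ 2 + q) :
    X * (X - C (2 * b)) - C q =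
      (X - C (b + √(b ^ 2 + q))) * (X - C (b - √(b ^ 2 + q))) := by
  have hs : C √(b ^ 2 + q) * C √(b ^ 2 + q) = C b ^ 2 + C q := by
    rw [← C_mul, Real.mul_self_sqrt h, C_add, C_pow]
  simp only [C_add, C_sub, C_mul, C_ofNat]
  linear_combination hs

namespace SimpleGraph

section Join

variable {V₁ V₂ : Type*} (G₁ : SimpleGraph V₁) (G₂ : SimpleGraph V₂)

theorem joinGraph_adj_inl_inl {u v : V₁} :
    (joinGraph G₁ G₂).Adj (.inl u) (.inl v) ↔ G₁.Adj u v := by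
  simp only [joinGraph, fromRel_adj, ne_eq, Sum.inl.injEq]
  exact ⟨fun ⟨_, h⟩ => h.elim id fun h => h.symm, fun h => ⟨h.ne, .inl h⟩⟩

theorem joinGraph_adj_inl_inr (u : V₁) (w : V₂) : (joinGraph G₁ G₂).Adj (.inl u) (.inr w) := by
  simp [joinGraph]

theorem joinGraph_dist_inl_inr (u : V₁) (w : V₂) : (joinGraph G₁ G₂).dist (.inl u) (.inr w) = 1 :=
  dist_eq_one_iff_adj.mpr (joinGraph_adj_inl_inr G₁ G₂ u w)

theorem joinGraph_dist_inr_inl (w : V₂) (u : V₁) : (joinGraph G₁ G₂).dist (.inr w) (.inl u) = 1 :=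
  dist_eq_one_iff_adj.mpr (joinGraph_adj_inl_inr G₁ G₂ u w).symm

theorem joinGraph_dist_inl_inl [Nonempty V₂] (u v : V₁) :
    (joinGraph G₁ G₂).dist (.inl u) (.inl v) =
      if u = v then 0 else if G₁.Adj u v then 1 else 2 := by
  obtain ⟨w⟩ := ‹Nonempty V₂›
  split_ifs with huv hadj
  · rw [huv, dist_self]
  · exact dist_eq_one_iff_adj.mpr ((joinGraph_adj_inl_inl G₁ G₂).mpr hadj)
  · let hwalk : (joinGraph G₁ G₂).Walk (.inl u) (.inl v) :=
      .cons (joinGraph_adj_inl_inr G₁ G₂ u w) (.cons (joinGraph_adj_inl_inr G₁ G₂ v w).symm .nil)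
    have hle : (joinGraph G₁ G₂).dist (.inl u) (.inl v) ≤ 2 := dist_le hwalk
    have hne0 : (joinGraph G₁ G₂).dist (.inl u) (.inl v) ≠ 0 := by
      rw [Ne, Reachable.dist_eq_zero_iff ⟨hwalk⟩, Sum.inl.injEq]
      exact huv
    have hne1 : (joinGraph G₁ G₂).dist (.inl u) (.inl v) ≠ 1 := by
      rw [Ne, dist_eq_one_iff_adj, joinGraph_adj_inl_inl]
      exact hadj
    omega

end Join

theorem IsRegularOfDegree.exists_compl_adj {V : Type*} [Fintype V] {G : SimpleGraph V} {r : ℕ}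
    (hreg : G.IsRegularOfDegree r) (hG : G ≠ ⊤) (u : V) : ∃ v, Gᶜ.Adj u v := by
  obtain ⟨a, b, hab⟩ := ne_bot_iff_exists_adj.mp (compl_eq_bot.not.mpr hG)
  rw [← degree_pos_iff_exists_adj, hreg.compl u, ← hreg.compl a]
  exact (degree_pos_iff_exists_adj _ _).mpr ⟨b, hab⟩

end SimpleGraph

theorem eccMatrix_apply_self {V : Type*} [Fintype V] (G : SimpleGraph V) (v : V) :
    eccMatrix G v v = 0 := by
  simp [eccMatrix]

section JoinVertex

variable {V : Type*} [Fintype V] (G : SimpleGraph V)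

theorem ecc_joinGraph_bot_inr [Nonempty V] (w : Unit) :
    ecc (joinGraph G (⊥ : SimpleGraph Unit)) (.inr w) = 1 := by
  obtain ⟨u⟩ := ‹Nonempty V›
  refine le_antisymm (Finset.sup_le ?_) ?_
  · rintro (v | ⟨⟩) -
    · rw [joinGraph_dist_inr_inl]
    · rw [dist_self]
      exact zero_le_one
  · rw [← joinGraph_dist_inr_inl G ⊥ w u]
    exact Finset.le_sup (f := (joinGraph G ⊥).dist (.inr w)) (Finset.mem_univ _)

theorem ecc_joinGraph_bot_inl {u : V} (hu : ∃ v, Gᶜ.Adj u v) :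
    ecc (joinGraph G (⊥ : SimpleGraph Unit)) (.inl u) = 2 := by
  obtain ⟨v, hv⟩ := hu
  obtain ⟨huv, hnadj⟩ := (compl_adj G u v).mp hv
  refine le_antisymm (Finset.sup_le ?_) ?_
  · rintro (w | ⟨⟩) -
    · rw [joinGraph_dist_inl_inl]
      split_ifs <;> omega
    · rw [joinGraph_dist_inl_inr]
      omega
  · have h2 : (joinGraph G (⊥ : SimpleGraph Unit)).dist (.inl u) (.inl v) = 2 := by
      rw [joinGraph_dist_inl_inl, if_neg huv, if_neg hnadj]
    rw [← h2]
    exact Finset.le_sup (f := (joinGraph G ⊥).dist (.inl u)) (Finset.mem_univ _)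

theorem eccMatrix_joinGraph_bot (hG : ∀ u, ∃ v, Gᶜ.Adj u v) :
    eccMatrix (joinGraph G (⊥ : SimpleGraph Unit)) =
      fromBlocks (2 • (Jmat V V - 1 - G.adjMatrix ℝ)) (Jmat V Unit) (Jmat Unit V) 0 := by
  ext (u | ⟨⟩) (v | ⟨⟩)
  · simp only [eccMatrix, ecc_joinGraph_bot_inl G (hG u), ecc_joinGraph_bot_inl G (hG v),
      min_self, joinGraph_dist_inl_inl, fromBlocks_apply₁₁]
    by_cases huv : u = v
    · simp [huv, Jmat]
    · by_cases hadj : G.Adj u v <;> simp [huv, hadj, Jmat]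
  · have : Nonempty V := ⟨u⟩
    simp [eccMatrix, ecc_joinGraph_bot_inl G (hG u), ecc_joinGraph_bot_inr,
      joinGraph_dist_inl_inr, Jmat]
  · have : Nonempty V := ⟨v⟩
    simp [eccMatrix, ecc_joinGraph_bot_inl G (hG v), ecc_joinGraph_bot_inr,
      joinGraph_dist_inr_inl, Jmat]
  · exact eccMatrix_apply_self _ _

end JoinVertex

namespace SimpleGraph

variable {V : Type*} [Fintype V] {G : SimpleGraph V} {r : ℕ}

variable [DecidableEq V]

theorem IsRegularOfDegree.neg_two_smul_adjMatrix_add_scalar_mulVec_one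
    (hreg : G.IsRegularOfDegree r) :
    ((-2 : ℝ) • G.adjMatrix ℝ + scalar V (-2)) *ᵥ 1 = (-2 * r - 2 : ℝ) • 1 := by
  ext v
  have hAv : (G.adjMatrix ℝ *ᵥ 1) v = r :=
    (adjMatrix_mulVec_const_apply_of_regular hreg).trans (mul_one _)
  simp only [add_mulVec, smul_mulVec, Pi.add_apply, Pi.smul_apply, hAv, smul_eq_mul, scalar_apply,
    diagonal_const_mulVec, Pi.one_apply, mul_one]
  ring

theorem IsRegularOfDegree.two_smul_Jmat_sub_one_sub_adjMatrix_mulVec_one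
    (hreg : G.IsRegularOfDegree r) :
    (2 • (Jmat V V - 1 - G.adjMatrix ℝ)) *ᵥ 1 =
      (2 * ((Fintype.card V : ℝ) - r - 1)) • 1 := by
  rw [two_smul_Jmat_sub_one_sub,
    add_const_mulVec_one hreg.neg_two_smul_adjMatrix_add_scalar_mulVec_one]
  ring_nf

theorem IsRegularOfDegree.charpoly_two_smul_Jmat_sub_one_sub_adjMatrix
    (hreg : G.IsRegularOfDegree r) {μ : Multiset ℝ}
    (hspec : (G.adjMatrix ℝ).charpoly.roots = (r : ℝ) ::ₘ μ) :
    (2 • (Jmat V V - 1 - G.adjMatrix ℝ)).charpoly =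
      (X - C (2 * ((Fintype.card V : ℝ) - r - 1))) *
        ((μ.map fun x => -2 * (x + 1)).map (X - C ·)).prod := by
  have hA : (G.adjMatrix ℝ).charpoly.Splits :=
    (isHermitian_iff_isSymm.mpr G.isSymm_adjMatrix).splits_charpoly
  have hM₀ : ((-2 : ℝ) • G.adjMatrix ℝ + scalar V (-2)).charpoly =
      (X - C (-2 * r - 2 : ℝ)) * ((μ.map fun x => -2 * (x + 1)).map (X - C ·)).prod := by
    rw [charpoly_smul_add_scalar hA (by norm_num), hspec, Multiset.map_cons, Multiset.map_cons,
      Multiset.prod_cons]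
    congr 2
    exact congrArg _ (Multiset.map_congr rfl fun t _ => by ring)
  apply mul_right_cancel₀ (X_sub_C_ne_zero (-2 * r - 2 : ℝ))
  rw [two_smul_Jmat_sub_one_sub,
    charpoly_add_const_mul hreg.neg_two_smul_adjMatrix_add_scalar_mulVec_one, hM₀]
  ring_nf

end SimpleGraph

theorem stmt0_general {V : Type*} [Fintype V] (G : SimpleGraph V) (p r : ℕ)
    (hp : Fintype.card V = p) (hreg : G.IsRegularOfDegree r)
    (hnc : G ≠ ⊤) (μ : Multiset ℝ)
    (hspec : (G.adjMatrix ℝ).charpoly.roots = (r : ℝ) ::ₘ μ) :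
    (eccMatrix (joinGraph G (⊥ : SimpleGraph Unit))).charpoly.roots =
      (((p : ℝ) - r - 1) + Real.sqrt (((p : ℝ) - r - 1) ^ 2 + p)) ::ₘ
        (((p : ℝ) - r - 1) - Real.sqrt (((p : ℝ) - r - 1) ^ 2 + p)) ::ₘ
          μ.map (fun x => -2 * (x + 1)) := by
  subst hp
  set Q : ℝ[X] := ((μ.map fun x => -2 * (x + 1)).map (X - C ·)).prod
  set c : ℝ := 2 * ((Fintype.card V : ℝ) - r - 1)
  have hE : (eccMatrix (joinGraph G (⊥ : SimpleGraph Unit))).charpoly =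
      Q * (X * (X - C c) - C (Fintype.card V : ℝ)) := by
    apply mul_right_cancel₀ (X_sub_C_ne_zero c)
    rw [eccMatrix_joinGraph_bot G (hreg.exists_compl_adj hnc),
      show Jmat V Unit = replicateCol Unit 1 from rfl,
      show Jmat Unit V = replicateRow Unit 1 from rfl,
      charpoly_fromBlocks_replicate_mul hreg.two_smul_Jmat_sub_one_sub_adjMatrix_mulVec_one,
      hreg.charpoly_two_smul_Jmat_sub_one_sub_adjMatrix hspec, map_natCast]
    ring
  have hmonic := charpoly_monic (eccMatrix (joinGraph G (⊥ : SimpleGraph Unit)))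
  rw [hE, X_mul_X_sub_C_sub_C_eq (by positivity)] at hmonic ⊢
  rw [roots_mul hmonic.ne_zero, roots_mul (mul_ne_zero (X_sub_C_ne_zero _) (X_sub_C_ne_zero _)),
    roots_multiset_prod_X_sub_C, roots_X_sub_C, roots_X_sub_C, add_comm, add_assoc,
    Multiset.singleton_add, Multiset.singleton_add]

/-- For an `r`-regular non-complete connected graph `G` on `p` vertices with
adjacency spectrum `{r} ∪ μ`, the eccentricity matrix of `G ∨ K₁` has spectrum
`{(p-r-1) ± √((p-r-1)² + p)} ∪ {-2(λ+1) : λ ∈ μ}`. -/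
theorem stmt0 {V : Type*} [Fintype V] (G : SimpleGraph V) (p r : ℕ)
    (hp : Fintype.card V = p) (hconn : G.Connected) (hreg : G.IsRegularOfDegree r)
    (hnc : G ≠ ⊤) (μ : Multiset ℝ)
    (hspec : (G.adjMatrix ℝ).charpoly.roots = (r : ℝ) ::ₘ μ) :
    (eccMatrix (joinGraph G (⊥ : SimpleGraph Unit))).charpoly.roots =
      (((p : ℝ) - r - 1) + Real.sqrt (((p : ℝ) - r - 1) ^ 2 + p)) ::ₘ
        (((p : ℝ) - r - 1) - Real.sqrt (((p : ℝ) - r - 1) ^ 2 + p)) ::ₘ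
          μ.map (fun x => -2 * (x + 1)) :=
  stmt0_general G p r hp hreg hnc μ hspec
end

section
/- Let G₀, G₁, G₂ be connected graphs with G₀ self-centered of diameter 2. Then the eccentricity matrix of G₀ ∨ (G₁ ∪ G₂) is reducible. -/
open SimpleGraph Matrix Finset

attribute [local instance] Fintype.ofFinite Classical.propDecidable

/-- If `G₀` is self-centered of diameter 2, then the eccentricity matrix of
`G₀ ∨ (G₁ ∪ G₂)` is reducible. -/
theorem stmt2 {V₀ V₁ V₂ : Type*} [Fintype V₀] [Fintype V₁] [Fintype V₂]
    (G₀ : SimpleGraph V₀) (G₁ : SimpleGraph V₁) (G₂ : SimpleGraph V₂)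
    (h₀ : G₀.Connected) (h₁ : G₁.Connected) (h₂ : G₂.Connected)
    (hsc : ∀ u v : V₀, ecc G₀ u = ecc G₀ v) (hdiam : gdiam G₀ = 2) :
    ¬ MatIrreducible (eccMatrix (joinGraph G₀ (disjUnion G₁ G₂))) := by
  set H := joinGraph G₀ (disjUnion G₁ G₂) with hH
  have hadjLR : ∀ (a : V₀) (x : V₁ ⊕ V₂), H.Adj (Sum.inl a) (Sum.inr x) := by
    intro a x; simp [hH, joinGraph]
  have hnadj12 : ∀ (b : V₁) (c : V₂),
      ¬ H.Adj (Sum.inr (Sum.inl b)) (Sum.inr (Sum.inr c)) := by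
    intro b c; simp [hH, joinGraph, _root_.disjUnion]
  have hnadjLL : ∀ a a' : V₀, ¬ G₀.Adj a a' → ¬ H.Adj (Sum.inl a) (Sum.inl a') := by
    intro a a' h; simp [hH, joinGraph, h, adj_comm]
  obtain ⟨a₀⟩ := h₀.nonempty
  obtain ⟨b₁⟩ := h₁.nonempty
  obtain ⟨c₂⟩ := h₂.nonempty
  have key : ∀ x y : V₀ ⊕ (V₁ ⊕ V₂), x ≠ y → ¬ H.Adj x y →
      (∃ w, H.Adj x w ∧ H.Adj w y) → H.dist x y = 2 := by
    rintro x y hne hna ⟨w, h1, h2⟩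
    have hle := H.dist_le (SimpleGraph.Walk.cons h1 (SimpleGraph.Walk.cons h2 SimpleGraph.Walk.nil))
    simp only [SimpleGraph.Walk.length_cons, SimpleGraph.Walk.length_nil] at hle
    have hreach : H.Reachable x y :=
      ⟨SimpleGraph.Walk.cons h1 (SimpleGraph.Walk.cons h2 SimpleGraph.Walk.nil)⟩
    have hpos : 0 < H.dist x y := hreach.pos_dist_of_ne hne
    have h1' : H.dist x y ≠ 1 := fun h => hna (SimpleGraph.dist_eq_one_iff_adj.mp h)
    omega
  have heccG : ∀ a : V₀, ecc G₀ a = 2 := by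
    intro a
    have h1 : gdiam G₀ = ecc G₀ a := by
      unfold gdiam
      rw [show (fun v => ecc G₀ v) = fun _ => ecc G₀ a from funext (fun v => hsc v a)]
      exact Finset.sup_const ⟨a₀, Finset.mem_univ a₀⟩ _
    rw [← h1, hdiam]
  have heccL : ∀ a : V₀, 2 ≤ ecc H (Sum.inl a) := by
    intro a
    obtain ⟨u', -, hu'⟩ := Finset.exists_mem_eq_sup Finset.univ
      ⟨a₀, Finset.mem_univ a₀⟩ (fun w => G₀.dist a w)
    have hd : G₀.dist a u' = 2 := by
      have := heccG a; unfold ecc at this; rw [hu'] at this; exact this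
    have hne : a ≠ u' := by intro h; subst h; simp [SimpleGraph.dist_self] at hd
    have hna : ¬ G₀.Adj a u' := by
      intro h; have := SimpleGraph.dist_eq_one_iff_adj.mpr h; omega
    have hd2 : H.dist (Sum.inl a) (Sum.inl u') = 2 :=
      key _ _ (by simp [hne]) (hnadjLL _ _ hna)
        ⟨Sum.inr (Sum.inl b₁), hadjLR a _, (hadjLR u' _).symm⟩
    calc 2 = H.dist (Sum.inl a) (Sum.inl u') := hd2.symm
      _ ≤ ecc H (Sum.inl a) := Finset.le_sup (Finset.mem_univ _)
  have heccR : ∀ x : V₁ ⊕ V₂, 2 ≤ ecc H (Sum.inr x) := by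
    intro x
    cases x with
    | inl b =>
      have hd2 : H.dist (Sum.inr (Sum.inl b)) (Sum.inr (Sum.inr c₂)) = 2 :=
        key _ _ (by simp) (hnadj12 b c₂)
          ⟨Sum.inl a₀, (hadjLR a₀ _).symm, hadjLR a₀ _⟩
      calc 2 = _ := hd2.symm
        _ ≤ ecc H (Sum.inr (Sum.inl b)) := Finset.le_sup (Finset.mem_univ _)
    | inr c =>
      have hd2 : H.dist (Sum.inr (Sum.inr c)) (Sum.inr (Sum.inl b₁)) = 2 :=
        key _ _ (by simp) (fun h => hnadj12 b₁ c h.symm)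
          ⟨Sum.inl a₀, (hadjLR a₀ _).symm, hadjLR a₀ _⟩
      calc 2 = _ := hd2.symm
        _ ≤ ecc H (Sum.inr (Sum.inr c)) := Finset.le_sup (Finset.mem_univ _)
  intro hirr
  obtain ⟨u, hu, v, hv, hM⟩ := hirr (Set.range Sum.inl)
    ⟨Sum.inl a₀, ⟨a₀, rfl⟩⟩ ⟨Sum.inr (Sum.inl b₁), by simp⟩
  obtain ⟨a, rfl⟩ := hu
  obtain ⟨x, rfl⟩ : ∃ x, v = Sum.inr x := by
    cases v with
    | inl a' => exact absurd ⟨a', rfl⟩ hv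
    | inr x => exact ⟨x, rfl⟩
  apply hM
  have hd1 : H.dist (Sum.inl a) (Sum.inr x) = 1 :=
    SimpleGraph.dist_eq_one_iff_adj.mpr (hadjLR a x)
  have h2a := heccL a
  have h2x := heccR x
  unfold eccMatrix
  rw [if_neg]
  rw [hd1]
  omega
end

section
/- Let G₀, G₁, G₂ be connected graphs with G₀ of diameter 2 but not self-centered. Then the eccentricity matrix of G₀ ∨ (G₁ ∪ G₂) is irreducible. -/
open SimpleGraph Matrix Finset

attribute [local instance] Fintype.ofFinite Classical.propDecidable

/-- If `G₀` has diameter 2 but is not self-centered, then the eccentricity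
matrix of `G₀ ∨ (G₁ ∪ G₂)` is irreducible. -/
theorem stmt3 {V₀ V₁ V₂ : Type*} [Fintype V₀] [Fintype V₁] [Fintype V₂]
    (G₀ : SimpleGraph V₀) (G₁ : SimpleGraph V₁) (G₂ : SimpleGraph V₂)
    (h₀ : G₀.Connected) (h₁ : G₁.Connected) (h₂ : G₂.Connected)
    (hns : ¬ ∀ u v : V₀, ecc G₀ u = ecc G₀ v) (hdiam : gdiam G₀ = 2) :
    MatIrreducible (eccMatrix (joinGraph G₀ (disjUnion G₁ G₂))) := by
  classical
  push_neg at hns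
  obtain ⟨u, v, huv⟩ := hns
  have hle2 : ∀ x : V₀, ecc G₀ x ≤ 2 := by
    intro x
    have : ecc G₀ x ≤ gdiam G₀ := Finset.le_sup (Finset.mem_univ x)
    omega
  -- pick w with ecc ≤ 1
  obtain ⟨w, hw1⟩ : ∃ w : V₀, ecc G₀ w ≤ 1 := by
    rcases lt_or_gt_of_ne huv with h | h
    · exact ⟨u, by have := hle2 v; omega⟩
    · exact ⟨v, by have := hle2 u; omega⟩
  have hne : u ≠ v := fun h => huv (by rw [h])
  -- w is universal in G₀
  have hadj : ∀ z : V₀, z ≠ w → G₀.Adj w z := by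
    intro z hz
    have hr : G₀.Reachable w z := h₀.preconnected w z
    have hd1 : G₀.dist w z ≤ 1 := le_trans (Finset.le_sup (Finset.mem_univ z)) hw1
    have hd0 : G₀.dist w z ≠ 0 := by
      intro h
      exact hz.symm ((hr.dist_eq_zero_iff).mp h)
    rw [← SimpleGraph.dist_eq_one_iff_adj]
    omega
  set H := joinGraph G₀ (disjUnion G₁ G₂) with hH
  set W : V₀ ⊕ (V₁ ⊕ V₂) := Sum.inl w with hW
  have hAdjH : ∀ x, x ≠ W → H.Adj W x := by
    intro x hx
    match x with
    | Sum.inl z =>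
        have hz : z ≠ w := fun h => hx (by rw [h])
        exact ⟨fun h => hx h.symm, Or.inl (hadj z hz)⟩
    | Sum.inr y =>
        exact ⟨fun h => hx h.symm, Or.inl trivial⟩
  have hdistH : ∀ x, x ≠ W → H.dist W x = 1 :=
    fun x hx => SimpleGraph.dist_eq_one_iff_adj.mpr (hAdjH x hx)
  have hnV₁ : Nonempty V₁ := h₁.nonempty
  obtain ⟨a⟩ := hnV₁
  have hA : (Sum.inr (Sum.inl a) : V₀ ⊕ (V₁ ⊕ V₂)) ≠ W := by simp [hW]
  have heccW : ecc H W = 1 := by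
    apply le_antisymm
    · apply Finset.sup_le
      intro y _
      by_cases hy : y = W
      · simp [hy, SimpleGraph.dist_self]
      · rw [hdistH y hy]
    · calc 1 = H.dist W (Sum.inr (Sum.inl a)) := (hdistH _ hA).symm
        _ ≤ ecc H W := Finset.le_sup (Finset.mem_univ _)
  have heccge : ∀ x, x ≠ W → 1 ≤ ecc H x := by
    intro x hx
    calc 1 = H.dist x W := by rw [SimpleGraph.dist_comm]; exact (hdistH x hx).symm
      _ ≤ ecc H x := Finset.le_sup (Finset.mem_univ _)
  have hM : ∀ x, x ≠ W → eccMatrix H W x ≠ 0 ∧ eccMatrix H x W ≠ 0 := by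
    intro x hx
    have h1 : H.dist W x = 1 := hdistH x hx
    have h2 : H.dist x W = 1 := by rw [SimpleGraph.dist_comm]; exact h1
    have hmin : min (ecc H W) (ecc H x) = 1 := by
      have := heccge x hx
      rw [heccW]; omega
    constructor
    · unfold eccMatrix
      rw [h1, hmin]
      simp
    · unfold eccMatrix
      rw [h2, min_comm, hmin]
      simp
  intro S hS hSc
  by_cases hWS : W ∈ S
  · obtain ⟨x, hx⟩ := hSc
    have hxW : x ≠ W := fun h => hx (h ▸ hWS)
    exact ⟨W, hWS, x, hx, (hM x hxW).1⟩
  · obtain ⟨x, hx⟩ := hS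
    have hxW : x ≠ W := fun h => hWS (h ▸ hx)
    exact ⟨x, hx, W, hWS, (hM x hxW).2⟩
end

section
/- Let G₀, G₁, G₂ be connected graphs with diam(G₀) ≥ 3. Then the eccentricity matrix of G₀ ∨ (G₁ ∪ G₂) is reducible. -/
open SimpleGraph Matrix Finset

attribute [local instance] Fintype.ofFinite Classical.propDecidable

/-- If `diam(G₀) ≥ 3`, then the eccentricity matrix of `G₀ ∨ (G₁ ∪ G₂)`
is reducible. -/
theorem stmt4 {V₀ V₁ V₂ : Type*} [Fintype V₀] [Fintype V₁] [Fintype V₂]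
    (G₀ : SimpleGraph V₀) (G₁ : SimpleGraph V₁) (G₂ : SimpleGraph V₂)
    (h₀ : G₀.Connected) (h₁ : G₁.Connected) (h₂ : G₂.Connected)
    (hdiam : 3 ≤ gdiam G₀) :
    ¬ MatIrreducible (eccMatrix (joinGraph G₀ (disjUnion G₁ G₂))) := by
  classical
  -- Basic adjacency facts about the join graph.
  set J := joinGraph G₀ (disjUnion G₁ G₂) with hJ
  have adj_ll : ∀ a b : V₀, J.Adj (Sum.inl a) (Sum.inl b) ↔ G₀.Adj a b := by
    intro a b
    simp only [hJ, joinGraph, SimpleGraph.fromRel_adj]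
    constructor
    · rintro ⟨h, h1 | h1⟩ <;> [exact h1; exact h1.symm]
    · exact fun h => ⟨fun he => h.ne (Sum.inl.injEq a b ▸ he), Or.inl h⟩
  have adj_lr : ∀ (a : V₀) (x : V₁ ⊕ V₂), J.Adj (Sum.inl a) (Sum.inr x) := by
    intro a x
    simp [hJ, joinGraph, SimpleGraph.fromRel_adj]
  have adj_12 : ∀ (v : V₁) (w : V₂),
      ¬ J.Adj (Sum.inr (Sum.inl v)) (Sum.inr (Sum.inr w)) := by
    intro v w
    simp [hJ, joinGraph, _root_.disjUnion, SimpleGraph.fromRel_adj]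
  obtain ⟨a₀⟩ := h₀.nonempty
  obtain ⟨b₁⟩ := h₁.nonempty
  obtain ⟨c₂⟩ := h₂.nonempty
  -- Every vertex of the form `inr x` is reachable from any vertex.
  have reach_lr : ∀ (a : V₀) (x : V₁ ⊕ V₂), J.Reachable (Sum.inl a) (Sum.inr x) :=
    fun a x => (adj_lr a x).reachable
  have reach_ll : ∀ a b : V₀, J.Reachable (Sum.inl a) (Sum.inl b) := fun a b =>
    (reach_lr a (Sum.inl b₁)).trans (reach_lr b (Sum.inl b₁)).symm
  have reach_rr : ∀ x y : V₁ ⊕ V₂, J.Reachable (Sum.inr x) (Sum.inr y) := fun x y =>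
    (reach_lr a₀ x).symm.trans (reach_lr a₀ y)
  -- distance between inl and inr vertices is 1
  have dist_lr : ∀ (a : V₀) (x : V₁ ⊕ V₂), J.dist (Sum.inl a) (Sum.inr x) = 1 :=
    fun a x => SimpleGraph.dist_eq_one_iff_adj.mpr (adj_lr a x)
  -- distance ≥ 2 helper
  have dist_ge2 : ∀ u v : (V₀ ⊕ (V₁ ⊕ V₂)), J.Reachable u v → u ≠ v → ¬ J.Adj u v →
      2 ≤ J.dist u v := by
    intro u v hr hne hadj
    have h0 : J.dist u v ≠ 0 := by
      intro h
      rcases SimpleGraph.dist_eq_zero_iff_eq_or_not_reachable.mp h with h' | h'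
      · exact hne h'
      · exact h' hr
    have h1 : J.dist u v ≠ 1 := fun h => hadj (SimpleGraph.dist_eq_one_iff_adj.mp h)
    omega
  -- Every inr vertex has eccentricity ≥ 2.
  have ecc_r : ∀ x : V₁ ⊕ V₂, 2 ≤ ecc J (Sum.inr x) := by
    intro x
    rcases x with v | w
    · refine le_trans ?_ (Finset.le_sup (f := fun w => J.dist (Sum.inr (Sum.inl v)) w)
        (Finset.mem_univ (Sum.inr (Sum.inr c₂))))
      exact dist_ge2 _ _ (reach_rr _ _) (by simp) (adj_12 v c₂)
    · refine le_trans ?_ (Finset.le_sup (f := fun z => J.dist (Sum.inr (Sum.inr w)) z)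
        (Finset.mem_univ (Sum.inr (Sum.inl b₁))))
      exact dist_ge2 _ _ (reach_rr _ _) (by simp)
        (fun h => adj_12 b₁ w h.symm)
  haveI : Nonempty V₀ := ⟨a₀⟩
  -- From diam(G₀) ≥ 3: no vertex of G₀ dominates all others.
  obtain ⟨u, -, hu⟩ := Finset.exists_mem_eq_sup (univ : Finset V₀)
    Finset.univ_nonempty (fun v => ecc G₀ v)
  obtain ⟨w, -, hw⟩ := Finset.exists_mem_eq_sup (univ : Finset V₀)
    Finset.univ_nonempty (fun z => G₀.dist u z)
  have huw : 3 ≤ G₀.dist u w := by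
    have : gdiam G₀ = G₀.dist u w := by rw [gdiam, hu, ecc, hw]
    omega
  have ecc_l : ∀ a : V₀, 2 ≤ ecc J (Sum.inl a) := by
    intro a
    -- find b with b ≠ a and ¬ G₀.Adj a b
    have : ∃ b : V₀, b ≠ a ∧ ¬ G₀.Adj a b := by
      by_contra hcon
      push_neg at hcon
      have htri := h₀.dist_triangle (u := u) (v := a) (w := w)
      have hu' : G₀.dist u a ≤ 1 := by
        rcases eq_or_ne u a with h | hne
        · rw [h, SimpleGraph.dist_self]; omega
        · exact le_of_eq (SimpleGraph.dist_eq_one_iff_adj.mpr ((hcon u hne).symm))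
      have hw' : G₀.dist a w ≤ 1 := by
        rcases eq_or_ne w a with h | hne
        · rw [h, SimpleGraph.dist_self]; omega
        · exact le_of_eq (SimpleGraph.dist_eq_one_iff_adj.mpr (hcon w hne))
      omega
    obtain ⟨b, hba, hnadj⟩ := this
    refine le_trans ?_ (Finset.le_sup (f := fun z => J.dist (Sum.inl a) z)
      (Finset.mem_univ (Sum.inl b)))
    refine dist_ge2 _ _ (reach_ll a b) (by simpa using (Ne.symm hba)) ?_
    rw [adj_ll]; exact hnadj
  -- Key: cross entries between inl and inr vanish.
  have key : ∀ (a : V₀) (x : V₁ ⊕ V₂), eccMatrix J (Sum.inl a) (Sum.inr x) = 0 := by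
    intro a x
    rw [eccMatrix]
    have h1 := dist_lr a x
    have h2 := ecc_l a
    have h3 := ecc_r x
    rw [if_neg]
    omega
  intro hirr
  obtain ⟨q, ⟨p, rfl⟩, r, hr, hne⟩ := hirr (Set.range Sum.inl)
    ⟨Sum.inl a₀, ⟨a₀, rfl⟩⟩ ⟨Sum.inr (Sum.inl b₁), by simp⟩
  rcases r with s | t
  · exact hr ⟨s, rfl⟩
  · exact hne (key p t)
end

section
/- Let G₁ be a connected graph different from K₂ (the single edge K_{1,1}) and G₂ any connected graph. Then the eccentricity matrix of the subdivision-vertex join G₁ ∨̇ G₂ is irreducible. -/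
open SimpleGraph Matrix Finset

attribute [local instance] Fintype.ofFinite Classical.propDecidable

section AuxStmt5

open SimpleGraph

private lemma cross_of_walk {X : Type*} {G : SimpleGraph X} (S : Set X) :
    ∀ {u v : X}, G.Walk u v → u ∈ S → v ∈ Sᶜ → ∃ a ∈ S, ∃ b ∈ Sᶜ, G.Adj a b := by
  intro u v p
  induction p with
  | nil => intro hu hv; exact absurd hu hv
  | @cons u x v h q ih =>
    intro hu hv
    by_cases hx : x ∈ S
    · exact ih hx hv
    · exact ⟨u, hu, x, hx, h⟩

private lemma eccMatrix_symm' {V : Type*} [Fintype V] (G : SimpleGraph V) (u v : V) :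
    eccMatrix G u v = eccMatrix G v u := by
  unfold eccMatrix
  rw [SimpleGraph.dist_comm, min_comm]

private lemma matIrr_of_reach {X : Type*} (M : Matrix X X ℝ)
    (hsym : ∀ u v, M u v = M v u) (x₀ : X)
    (h : ∀ u, (SimpleGraph.fromRel (fun p q => M p q ≠ 0)).Reachable u x₀) :
    MatIrreducible M := by
  intro S hS hSc
  obtain ⟨u, hu⟩ := hS
  obtain ⟨v, hv⟩ := hSc
  obtain ⟨p⟩ := (h u).trans (h v).symm
  obtain ⟨a, ha, b, hb, hab⟩ := cross_of_walk S p hu hv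
  rw [SimpleGraph.fromRel_adj] at hab
  rcases hab with ⟨hne, h1 | h1⟩
  · exact ⟨a, ha, b, hb, h1⟩
  · exact ⟨a, ha, b, hb, by rw [hsym]; exact h1⟩

private lemma two_le_dist' {X : Type*} {G : SimpleGraph X} {u v : X}
    (hr : G.Reachable u v) (hne : u ≠ v) (hna : ¬ G.Adj u v) : 2 ≤ G.dist u v := by
  obtain ⟨p, hp⟩ := hr.exists_walk_length_eq_dist
  cases p with
  | nil => exact absurd rfl hne
  | cons h q =>
    cases q with
    | nil => exact absurd h hna
    | cons h' r =>
      rw [← hp]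
      simp only [SimpleGraph.Walk.length_cons]
      omega

private lemma three_le_dist' {X : Type*} {G : SimpleGraph X} {u v : X}
    (hr : G.Reachable u v) (hne : u ≠ v) (hna : ¬ G.Adj u v)
    (hmid : ∀ x, G.Adj u x → G.Adj x v → False) : 3 ≤ G.dist u v := by
  obtain ⟨p, hp⟩ := hr.exists_walk_length_eq_dist
  cases p with
  | nil => exact absurd rfl hne
  | cons h q =>
    cases q with
    | nil => exact absurd h hna
    | @cons x y v h' r =>
      cases r with
      | nil => exact (hmid _ h h').elim
      | cons h'' t =>
        rw [← hp]
        simp only [SimpleGraph.Walk.length_cons]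
        omega

private lemma sym2_exists_mem {α : Type*} (s : Sym2 α) : ∃ x, x ∈ s := by
  induction s using Sym2.ind with
  | _ x y => exact ⟨x, Sym2.mem_mk_left x y⟩

private lemma dist_le_of_walk {X : Type*} {G : SimpleGraph X} {u v : X} (n : ℕ) (p : G.Walk u v)
    (h : p.length = n) : G.dist u v ≤ n := h ▸ SimpleGraph.dist_le p

section Graphs

set_option linter.unusedSectionVars false

variable {V₁ V₂ : Type*} [Fintype V₁] [Fintype V₂] {G₁ : SimpleGraph V₁} {G₂ : SimpleGraph V₂}

private lemma adj_AC (a : V₁) (c : V₂) :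
    (subVertexJoin G₁ G₂).Adj (Sum.inl (Sum.inl a)) (Sum.inr c) := by
  rw [subVertexJoin, SimpleGraph.fromRel_adj]
  exact ⟨by simp, Or.inl trivial⟩

private lemma adj_AB {a : V₁} {e : G₁.edgeSet} (h : a ∈ (e : Sym2 V₁)) :
    (subVertexJoin G₁ G₂).Adj (Sum.inl (Sum.inl a)) (Sum.inl (Sum.inr e)) := by
  rw [subVertexJoin, SimpleGraph.fromRel_adj]
  exact ⟨by simp, Or.inl h⟩

private lemma adj_AB_iff {a : V₁} {e : G₁.edgeSet} :
    (subVertexJoin G₁ G₂).Adj (Sum.inl (Sum.inl a)) (Sum.inl (Sum.inr e)) ↔ a ∈ (e : Sym2 V₁) := by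
  constructor
  · rw [subVertexJoin, SimpleGraph.fromRel_adj]
    rintro ⟨-, h | h⟩
    · exact h
    · exact h.elim
  · exact adj_AB

private lemma not_adj_AA (a a' : V₁) :
    ¬ (subVertexJoin G₁ G₂).Adj (Sum.inl (Sum.inl a)) (Sum.inl (Sum.inl a')) := by
  rw [subVertexJoin, SimpleGraph.fromRel_adj]
  rintro ⟨-, h | h⟩ <;> exact h

private lemma not_adj_BC (e : G₁.edgeSet) (c : V₂) :
    ¬ (subVertexJoin G₁ G₂).Adj (Sum.inl (Sum.inr e)) (Sum.inr c) := by
  rw [subVertexJoin, SimpleGraph.fromRel_adj]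
  rintro ⟨-, h | h⟩ <;> exact h

private lemma adj_B_inv {e : G₁.edgeSet} {x : (V₁ ⊕ G₁.edgeSet) ⊕ V₂}
    (h : (subVertexJoin G₁ G₂).Adj x (Sum.inl (Sum.inr e))) :
    ∃ v, v ∈ (e : Sym2 V₁) ∧ x = Sum.inl (Sum.inl v) := by
  rcases x with (a | f) | c
  · rw [subVertexJoin, SimpleGraph.fromRel_adj] at h
    rcases h with ⟨-, h | h⟩
    · exact ⟨a, h, rfl⟩
    · exact h.elim
  · rw [subVertexJoin, SimpleGraph.fromRel_adj] at h
    rcases h with ⟨-, h | h⟩ <;> exact h.elim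
  · rw [subVertexJoin, SimpleGraph.fromRel_adj] at h
    rcases h with ⟨-, h | h⟩ <;> exact h.elim

private lemma dist_AC (a : V₁) (c : V₂) :
    (subVertexJoin G₁ G₂).dist (Sum.inl (Sum.inl a)) (Sum.inr c) = 1 := by
  have hadj := adj_AC (G₁ := G₁) (G₂ := G₂) a c
  have h1 := dist_le_of_walk 1 (SimpleGraph.Walk.cons hadj SimpleGraph.Walk.nil) (by simp)
  have h2 := hadj.reachable.pos_dist_of_ne (by simp)
  omega

private lemma dist_BC (e : G₁.edgeSet) (c : V₂) :
    (subVertexJoin G₁ G₂).dist (Sum.inl (Sum.inr e)) (Sum.inr c) = 2 := by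
  obtain ⟨x, hx⟩ := sym2_exists_mem (e : Sym2 V₁)
  have h1 := dist_le_of_walk 2 (SimpleGraph.Walk.cons (adj_AB (G₂ := G₂) hx).symm
    (SimpleGraph.Walk.cons (adj_AC x c) SimpleGraph.Walk.nil)) (by simp)
  have h2 := two_le_dist' (SimpleGraph.Walk.cons (adj_AB (G₂ := G₂) hx).symm
    (SimpleGraph.Walk.cons (adj_AC x c) SimpleGraph.Walk.nil)).reachable
    (by simp) (not_adj_BC e c)
  omega

private lemma dist_AA (c₀ : V₂) {a a' : V₁} (h : a ≠ a') :
    (subVertexJoin G₁ G₂).dist (Sum.inl (Sum.inl a)) (Sum.inl (Sum.inl a')) = 2 := by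
  have h1 := dist_le_of_walk 2 (SimpleGraph.Walk.cons (adj_AC (G₁ := G₁) (G₂ := G₂) a c₀)
    (SimpleGraph.Walk.cons (adj_AC a' c₀).symm SimpleGraph.Walk.nil)) (by simp)
  have h2 := two_le_dist' (SimpleGraph.Walk.cons (adj_AC (G₁ := G₁) (G₂ := G₂) a c₀)
    (SimpleGraph.Walk.cons (adj_AC a' c₀).symm SimpleGraph.Walk.nil)).reachable
    (by simp [h]) (not_adj_AA a a')
  omega

private lemma dist_AB_mem {a : V₁} {e : G₁.edgeSet} (h : a ∈ (e : Sym2 V₁)) :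
    (subVertexJoin G₁ G₂).dist (Sum.inl (Sum.inl a)) (Sum.inl (Sum.inr e)) = 1 := by
  have hadj := adj_AB (G₂ := G₂) h
  have h1 := dist_le_of_walk 1 (SimpleGraph.Walk.cons hadj SimpleGraph.Walk.nil) (by simp)
  have h2 := hadj.reachable.pos_dist_of_ne (by simp)
  omega

private lemma dist_AB_not_mem (c₀ : V₂) {a : V₁} {e : G₁.edgeSet} (h : a ∉ (e : Sym2 V₁)) :
    (subVertexJoin G₁ G₂).dist (Sum.inl (Sum.inl a)) (Sum.inl (Sum.inr e)) = 3 := by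
  obtain ⟨x, hx⟩ := sym2_exists_mem (e : Sym2 V₁)
  have h1 := dist_le_of_walk 3 (SimpleGraph.Walk.cons (adj_AC (G₁ := G₁) (G₂ := G₂) a c₀)
    (SimpleGraph.Walk.cons (adj_AC x c₀).symm
      (SimpleGraph.Walk.cons (adj_AB hx) SimpleGraph.Walk.nil))) (by simp)
  have hna : ¬ (subVertexJoin G₁ G₂).Adj (Sum.inl (Sum.inl a)) (Sum.inl (Sum.inr e)) := by
    rw [adj_AB_iff]; exact h
  have hmid : ∀ y, (subVertexJoin G₁ G₂).Adj (Sum.inl (Sum.inl a)) y →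
      (subVertexJoin G₁ G₂).Adj y (Sum.inl (Sum.inr e)) → False := by
    intro y hy1 hy2
    obtain ⟨v, -, rfl⟩ := adj_B_inv hy2
    exact not_adj_AA a v hy1
  have h2 := three_le_dist' (SimpleGraph.Walk.cons (adj_AC (G₁ := G₁) (G₂ := G₂) a c₀)
    (SimpleGraph.Walk.cons (adj_AC x c₀).symm
      (SimpleGraph.Walk.cons (adj_AB hx) SimpleGraph.Walk.nil))).reachable
    (by simp) hna hmid
  omega

private lemma dist_AB_le3 (c₀ : V₂) (a : V₁) (e : G₁.edgeSet) :
    (subVertexJoin G₁ G₂).dist (Sum.inl (Sum.inl a)) (Sum.inl (Sum.inr e)) ≤ 3 := by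
  by_cases h : a ∈ (e : Sym2 V₁)
  · rw [dist_AB_mem h]; omega
  · rw [dist_AB_not_mem c₀ h]

private lemma dist_CC_le2 (a₀ : V₁) (c c' : V₂) :
    (subVertexJoin G₁ G₂).dist (Sum.inr c) (Sum.inr c') ≤ 2 := by
  by_cases h : c = c'
  · subst h; rw [SimpleGraph.dist_self]; omega
  · exact dist_le_of_walk 2 (SimpleGraph.Walk.cons (adj_AC (G₁ := G₁) (G₂ := G₂) a₀ c).symm
      (SimpleGraph.Walk.cons (adj_AC a₀ c') SimpleGraph.Walk.nil)) (by simp)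

private lemma ecc_C (e₀ : G₁.edgeSet) (c : V₂) :
    ecc (subVertexJoin G₁ G₂) (Sum.inr c) = 2 := by
  obtain ⟨x, hx⟩ := sym2_exists_mem (e₀ : Sym2 V₁)
  apply le_antisymm
  · apply Finset.sup_le
    intro w _
    rcases w with (a | e) | c'
    · rw [SimpleGraph.dist_comm, dist_AC]; omega
    · rw [SimpleGraph.dist_comm, dist_BC]
    · exact dist_CC_le2 x c c'
  · have h := dist_BC (G₂ := G₂) e₀ c
    rw [SimpleGraph.dist_comm] at h
    calc (2 : ℕ) = (subVertexJoin G₁ G₂).dist (Sum.inr c) (Sum.inl (Sum.inr e₀)) := h.symm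
    _ ≤ _ := Finset.le_sup (Finset.mem_univ _)

private lemma ecc_A_le3 (c₀ : V₂) (a : V₁) :
    ecc (subVertexJoin G₁ G₂) (Sum.inl (Sum.inl a)) ≤ 3 := by
  apply Finset.sup_le
  intro w _
  rcases w with (a' | e) | c
  · by_cases h : a = a'
    · subst h; rw [SimpleGraph.dist_self]; omega
    · rw [dist_AA c₀ h]; omega
  · exact dist_AB_le3 c₀ a e
  · rw [dist_AC]; omega

private lemma ecc_A_eq3 (c₀ : V₂) {a : V₁} {e : G₁.edgeSet} (h : a ∉ (e : Sym2 V₁)) :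
    ecc (subVertexJoin G₁ G₂) (Sum.inl (Sum.inl a)) = 3 := by
  apply le_antisymm (ecc_A_le3 c₀ a)
  calc (3 : ℕ) = (subVertexJoin G₁ G₂).dist (Sum.inl (Sum.inl a)) (Sum.inl (Sum.inr e)) :=
        (dist_AB_not_mem c₀ h).symm
  _ ≤ _ := Finset.le_sup (Finset.mem_univ _)

private lemma ecc_A_eq2 (c₀ : V₂) {a : V₁} (hstar : ∀ e : G₁.edgeSet, a ∈ (e : Sym2 V₁))
    {a' : V₁} (ha' : a' ≠ a) :
    ecc (subVertexJoin G₁ G₂) (Sum.inl (Sum.inl a)) = 2 := by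
  apply le_antisymm
  · apply Finset.sup_le
    intro w _
    rcases w with (b | e) | c
    · by_cases h : a = b
      · subst h; rw [SimpleGraph.dist_self]; omega
      · rw [dist_AA c₀ h]
    · rw [dist_AB_mem (hstar e)]; omega
    · rw [dist_AC]; omega
  · calc (2 : ℕ) = (subVertexJoin G₁ G₂).dist (Sum.inl (Sum.inl a)) (Sum.inl (Sum.inl a')) :=
        (dist_AA c₀ (Ne.symm ha')).symm
    _ ≤ _ := Finset.le_sup (Finset.mem_univ _)

private lemma entry_BC (e : G₁.edgeSet) (c : V₂) :
    eccMatrix (subVertexJoin G₁ G₂) (Sum.inl (Sum.inr e)) (Sum.inr c) ≠ 0 := by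
  have h1 := dist_BC (G₂ := G₂) e c
  have h2 := ecc_C (G₂ := G₂) e c
  have h3 : 2 ≤ ecc (subVertexJoin G₁ G₂) (Sum.inl (Sum.inr e)) := by
    calc (2 : ℕ) = (subVertexJoin G₁ G₂).dist (Sum.inl (Sum.inr e)) (Sum.inr c) := h1.symm
    _ ≤ _ := Finset.le_sup (Finset.mem_univ _)
  unfold eccMatrix
  rw [if_pos (by omega), h1]
  norm_num

private lemma entry_AB (c₀ : V₂) {a : V₁} {e : G₁.edgeSet} (h : a ∉ (e : Sym2 V₁)) :
    eccMatrix (subVertexJoin G₁ G₂) (Sum.inl (Sum.inl a)) (Sum.inl (Sum.inr e)) ≠ 0 := by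
  have h1 := dist_AB_not_mem (G₂ := G₂) c₀ h
  have h2 := ecc_A_eq3 (G₂ := G₂) c₀ h
  have h3 : 3 ≤ ecc (subVertexJoin G₁ G₂) (Sum.inl (Sum.inr e)) := by
    have h1' := h1
    rw [SimpleGraph.dist_comm] at h1'
    calc (3 : ℕ) = (subVertexJoin G₁ G₂).dist (Sum.inl (Sum.inr e)) (Sum.inl (Sum.inl a)) := h1'.symm
    _ ≤ _ := Finset.le_sup (Finset.mem_univ _)
  unfold eccMatrix
  rw [if_pos (by omega), h1]
  norm_num

private lemma entry_AA (c₀ : V₂) {a : V₁} (hstar : ∀ e : G₁.edgeSet, a ∈ (e : Sym2 V₁))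
    {z : V₁} (hz : z ≠ a) :
    eccMatrix (subVertexJoin G₁ G₂) (Sum.inl (Sum.inl a)) (Sum.inl (Sum.inl z)) ≠ 0 := by
  have h1 := dist_AA (G₁ := G₁) (G₂ := G₂) c₀ (Ne.symm hz)
  have h2 := ecc_A_eq2 (G₂ := G₂) c₀ hstar hz
  have h3 : 2 ≤ ecc (subVertexJoin G₁ G₂) (Sum.inl (Sum.inl z)) := by
    have h1' := h1
    rw [SimpleGraph.dist_comm] at h1'
    calc (2 : ℕ) = (subVertexJoin G₁ G₂).dist (Sum.inl (Sum.inl z)) (Sum.inl (Sum.inl a)) := h1'.symm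
    _ ≤ _ := Finset.le_sup (Finset.mem_univ _)
  unfold eccMatrix
  rw [if_pos (by omega), h1]
  norm_num

private lemma entry_AC (hempty : IsEmpty G₁.edgeSet) (hsub : Subsingleton V₁)
    (a : V₁) (c : V₂) :
    eccMatrix (subVertexJoin G₁ G₂) (Sum.inl (Sum.inl a)) (Sum.inr c) ≠ 0 := by
  have h1 := dist_AC (G₁ := G₁) (G₂ := G₂) a c
  have h2 : ecc (subVertexJoin G₁ G₂) (Sum.inl (Sum.inl a)) = 1 := by
    apply le_antisymm
    · apply Finset.sup_le
      intro w _
      rcases w with (b | e) | c'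
      · have : a = b := Subsingleton.elim a b
        subst this
        rw [SimpleGraph.dist_self]; omega
      · exact hempty.elim e
      · rw [dist_AC]
    · calc (1 : ℕ) = (subVertexJoin G₁ G₂).dist (Sum.inl (Sum.inl a)) (Sum.inr c) := h1.symm
      _ ≤ _ := Finset.le_sup (Finset.mem_univ _)
  have h3 : 1 ≤ ecc (subVertexJoin G₁ G₂) (Sum.inr c) := by
    have h1' := h1
    rw [SimpleGraph.dist_comm] at h1'
    calc (1 : ℕ) = (subVertexJoin G₁ G₂).dist (Sum.inr c) (Sum.inl (Sum.inl a)) := h1'.symm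
    _ ≤ _ := Finset.le_sup (Finset.mem_univ _)
  unfold eccMatrix
  rw [if_pos (by omega), h1]
  norm_num

private lemma k2_of_cover (G₁ : SimpleGraph V₁) (e₀ : G₁.edgeSet)
    (hcov : ∀ z : V₁, z ∈ (e₀ : Sym2 V₁)) :
    Nonempty (G₁ ≃g (⊤ : SimpleGraph (Fin 2))) := by
  obtain ⟨s, hs⟩ := e₀
  induction s using Sym2.ind with
  | _ x y =>
    have hadj : G₁.Adj x y := hs
    have hxy : x ≠ y := hadj.ne
    have hmem : ∀ z : V₁, z = x ∨ z = y := by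
      intro z
      exact Sym2.mem_iff.mp (hcov z)
    refine ⟨⟨⟨fun v => if v = x then 0 else 1, fun i => if i = 0 then x else y, ?_, ?_⟩, ?_⟩⟩
    · intro v
      rcases hmem v with rfl | rfl
      · simp
      · simp [hxy.symm, (by decide : (1 : Fin 2) ≠ 0)]
    · intro i
      fin_cases i
      · simp
      · simp [hxy.symm]
    · intro u v
      simp only [Equiv.coe_fn_mk, SimpleGraph.top_adj]
      rcases hmem u with rfl | rfl <;> rcases hmem v with rfl | rfl <;>
        simp [hxy, hxy.symm, hadj, hadj.symm, (by decide : (0 : Fin 2) ≠ 1),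
          (by decide : (1 : Fin 2) ≠ 0)]

private lemma exists_ne_of_edge (G₁ : SimpleGraph V₁) (e : G₁.edgeSet) (a : V₁) :
    ∃ b : V₁, b ≠ a := by
  obtain ⟨s, hs⟩ := e
  induction s using Sym2.ind with
  | _ x y =>
    have hxy : x ≠ y := (G₁.mem_edgeSet.mp hs).ne
    by_cases hxa : x = a
    · exact ⟨y, by rw [← hxa]; exact hxy.symm⟩
    · exact ⟨x, hxa⟩

end Graphs

end AuxStmt5

/-- For connected graphs `G₁ ≠ K₂` and `G₂`, the eccentricity matrix of the
subdivision-vertex join `G₁ ∨̇ G₂` is irreducible. -/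
theorem stmt5 {V₁ V₂ : Type*} [Fintype V₁] [Fintype V₂]
    (G₁ : SimpleGraph V₁) (G₂ : SimpleGraph V₂)
    (h₁ : G₁.Connected) (h₂ : G₂.Connected)
    (hK2 : IsEmpty (G₁ ≃g (⊤ : SimpleGraph (Fin 2)))) :
    MatIrreducible (eccMatrix (subVertexJoin G₁ G₂)) := by
  classical
  obtain ⟨c₀⟩ := h₂.nonempty
  obtain ⟨a₀⟩ := h₁.nonempty
  set M := eccMatrix (subVertexJoin G₁ G₂) with hM
  apply matIrr_of_reach M (eccMatrix_symm' _) (Sum.inr c₀)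
  intro u
  set R := SimpleGraph.fromRel (fun p q => M p q ≠ 0) with hR
  have key : ∀ p q, p ≠ q → M p q ≠ 0 → R.Adj p q := by
    intro p q h h'
    rw [hR, SimpleGraph.fromRel_adj]
    exact ⟨h, Or.inl h'⟩
  by_cases hB : Nonempty G₁.edgeSet
  · obtain ⟨e₀⟩ := hB
    have hBtoC : ∀ e : G₁.edgeSet, R.Adj (Sum.inl (Sum.inr e)) (Sum.inr c₀) := fun e =>
      key _ _ (by simp) (entry_BC e c₀)
    rcases u with (a | e) | c
    · by_cases hs : ∀ e : G₁.edgeSet, a ∈ (e : Sym2 V₁)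
      · have hz : ∃ z : V₁, z ∉ (e₀ : Sym2 V₁) := by
          by_contra hcon
          push_neg at hcon
          exact hK2.false (k2_of_cover G₁ e₀ hcon).some
        obtain ⟨z, hz⟩ := hz
        have hza : z ≠ a := fun h => hz (h ▸ hs e₀)
        have h1 : R.Adj (Sum.inl (Sum.inl a)) (Sum.inl (Sum.inl z)) :=
          key _ _ (by simp [Ne.symm hza]) (entry_AA c₀ hs hza)
        have h2 : R.Adj (Sum.inl (Sum.inl z)) (Sum.inl (Sum.inr e₀)) :=
          key _ _ (by simp) (entry_AB c₀ hz)
        exact h1.reachable.trans (h2.reachable.trans (hBtoC e₀).reachable)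
      · push_neg at hs
        obtain ⟨e, he⟩ := hs
        exact (key _ _ (by simp) (entry_AB c₀ he)).reachable.trans (hBtoC e).reachable
    · exact (hBtoC e).reachable
    · have h1 : R.Adj (Sum.inr c) (Sum.inl (Sum.inr e₀)) := by
        refine key _ _ (by simp) ?_
        rw [hM, eccMatrix_symm']
        exact entry_BC e₀ c
      exact h1.reachable.trans (hBtoC e₀).reachable
  · have hsub : Subsingleton V₁ := by
      constructor
      intro a b
      obtain ⟨p⟩ := h₁.preconnected a b
      cases p with
      | nil => rfl
      | cons h q => exact (hB ⟨⟨_, G₁.mem_edgeSet.mpr h⟩⟩).elim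
    have hempty : IsEmpty G₁.edgeSet := not_nonempty_iff.mp hB
    rcases u with (a | e) | c
    · exact (key _ _ (by simp) (entry_AC hempty hsub a c₀)).reachable
    · exact (hempty.elim e)
    · by_cases hc : c = c₀
      · subst hc; exact SimpleGraph.Reachable.refl _
      · have h1 : R.Adj (Sum.inr c) (Sum.inl (Sum.inl a₀)) := by
          refine key _ _ (by simp) ?_
          rw [hM, eccMatrix_symm']
          exact entry_AC hempty hsub a₀ c
        exact h1.reachable.trans (key _ _ (by simp) (entry_AC hempty hsub a₀ c₀)).reachable
end

section
/- Let G₁ be r₁-regular with r₁ ≥ 2 and G₂ be r₂-regular. If β is an adjacency eigenvalue of G₂ with an eigenvector orthogonal to the all-ones vector, then −2(1 + β) is an eigenvalue of the eccentricity matrix of the subdivision-vertex join G₁ ∨̇ G₂. -/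
open SimpleGraph Matrix Finset

attribute [local instance] Fintype.ofFinite Classical.propDecidable

section MyAux

lemma my_dist_le_two {V : Type*} {G : SimpleGraph V} {u x v : V}
    (h1 : G.Adj u x) (h2 : G.Adj x v) : G.dist u v ≤ 2 := by
  simpa using SimpleGraph.dist_le (SimpleGraph.Walk.cons h1 (SimpleGraph.Walk.cons h2 SimpleGraph.Walk.nil))

lemma my_dist_eq_two {V : Type*} {G : SimpleGraph V} {u x v : V}
    (hne : u ≠ v) (hna : ¬G.Adj u v) (h1 : G.Adj u x) (h2 : G.Adj x v) :
    G.dist u v = 2 := by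
  have hle : G.dist u v ≤ 2 := my_dist_le_two h1 h2
  have h0 : G.dist u v ≠ 0 := by
    intro h
    rcases SimpleGraph.dist_eq_zero_iff_eq_or_not_reachable.mp h with h' | h'
    · exact hne h'
    · exact h' (SimpleGraph.Walk.cons h1 (SimpleGraph.Walk.cons h2 SimpleGraph.Walk.nil)).reachable
  have hone : G.dist u v ≠ 1 := fun h => hna (SimpleGraph.dist_eq_one_iff_adj.mp h)
  omega

end MyAux

/-- For `r₁`-regular `G₁` (`r₁ ≥ 2`) and `r₂`-regular `G₂`, if `β` is an
adjacency eigenvalue of `G₂` with an eigenvector orthogonal to the all-ones vector,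
then `-2(1+β)` is an eigenvalue of `ε(G₁ ∨̇ G₂)`. -/
theorem stmt8 {V₁ V₂ : Type*} [Fintype V₁] [Fintype V₂]
    (G₁ : SimpleGraph V₁) (G₂ : SimpleGraph V₂) (r₁ r₂ : ℕ) (β : ℝ)
    (h₁ : G₁.Connected) (h₂ : G₂.Connected)
    (hr₁ : G₁.IsRegularOfDegree r₁) (hr₁2 : 2 ≤ r₁)
    (hr₂ : G₂.IsRegularOfDegree r₂)
    (W : V₂ → ℝ) (hW : W ≠ 0) (hev : (G₂.adjMatrix ℝ).mulVec W = β • W)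
    (horth : ∑ i, W i = 0) :
    IsEigenvalue (eccMatrix (subVertexJoin G₁ G₂)) (-2 * (1 + β)) := by
  classical
  set H := subVertexJoin G₁ G₂ with hH
  -- nonemptiness and neighbors
  obtain ⟨v₀⟩ := h₁.nonempty
  obtain ⟨w₀⟩ := h₂.nonempty
  have hnbr : ∀ v : V₁, ∃ u, G₁.Adj v u := by
    intro v
    have hd : 0 < G₁.degree v := by rw [hr₁ v]; omega
    obtain ⟨u, hu⟩ := (G₁.degree_pos_iff_exists_adj v).mp hd
    exact ⟨u, hu⟩
  -- basic adjacency facts in H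
  have adj_vw : ∀ (v : V₁) (w : V₂), H.Adj (Sum.inl (Sum.inl v)) (Sum.inr w) := by
    intro v w
    rw [hH, subVertexJoin, SimpleGraph.fromRel_adj]
    exact ⟨by simp, Or.inl trivial⟩
  have adj_ve : ∀ (v : V₁) (e : G₁.edgeSet), v ∈ (e : Sym2 V₁) →
      H.Adj (Sum.inl (Sum.inl v)) (Sum.inl (Sum.inr e)) := by
    intro v e hv
    rw [hH, subVertexJoin, SimpleGraph.fromRel_adj]
    exact ⟨by simp, Or.inl hv⟩
  have adj_ww : ∀ (w w' : V₂), H.Adj (Sum.inr w) (Sum.inr w') ↔ G₂.Adj w w' := by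
    intro w w'
    rw [hH, subVertexJoin, SimpleGraph.fromRel_adj]
    constructor
    · rintro ⟨-, h | h⟩
      · exact h
      · exact h.symm
    · intro h
      exact ⟨by simpa using h.ne, Or.inl h⟩
  have nadj_vv : ∀ (v u : V₁), ¬ H.Adj (Sum.inl (Sum.inl v)) (Sum.inl (Sum.inl u)) := by
    intro v u
    rw [hH, subVertexJoin, SimpleGraph.fromRel_adj]
    rintro ⟨-, h | h⟩ <;> exact h
  have nadj_ew : ∀ (e : G₁.edgeSet) (w : V₂), ¬ H.Adj (Sum.inl (Sum.inr e)) (Sum.inr w) := by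
    intro e w
    rw [hH, subVertexJoin, SimpleGraph.fromRel_adj]
    rintro ⟨-, h | h⟩ <;> exact h
  have nadj_ee : ∀ (e f : G₁.edgeSet), ¬ H.Adj (Sum.inl (Sum.inr e)) (Sum.inl (Sum.inr f)) := by
    intro e f
    rw [hH, subVertexJoin, SimpleGraph.fromRel_adj]
    rintro ⟨-, h | h⟩ <;> exact h
  -- distances
  have dist_vw : ∀ (v : V₁) (w : V₂), H.dist (Sum.inl (Sum.inl v)) (Sum.inr w) = 1 :=
    fun v w => SimpleGraph.dist_eq_one_iff_adj.mpr (adj_vw v w)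
  have dist_ew : ∀ (e : G₁.edgeSet) (w : V₂), H.dist (Sum.inl (Sum.inr e)) (Sum.inr w) = 2 := by
    intro e w
    have hm : (e : Sym2 V₁).out.1 ∈ (e : Sym2 V₁) := Sym2.out_fst_mem _
    exact my_dist_eq_two (by simp) (nadj_ew e w)
      ((adj_ve _ e hm).symm) (adj_vw _ w)
  have dist_ww : ∀ (w w' : V₂), w ≠ w' → ¬ G₂.Adj w w' →
      H.dist (Sum.inr w) (Sum.inr w') = 2 := by
    intro w w' hne hna
    exact my_dist_eq_two (by simpa using hne) (fun h => hna ((adj_ww w w').mp h))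
      ((adj_vw v₀ w).symm) (adj_vw v₀ w')
  have dist_vv : ∀ (v u : V₁), v ≠ u → H.dist (Sum.inl (Sum.inl v)) (Sum.inl (Sum.inl u)) = 2 := by
    intro v u hne
    exact my_dist_eq_two (by simpa using hne) (nadj_vv v u)
      (adj_vw v w₀) ((adj_vw u w₀).symm)
  -- an edge of G₁
  obtain ⟨u₀, hu₀⟩ := hnbr v₀
  have he₀ : s(v₀, u₀) ∈ G₁.edgeSet := hu₀
  set e₀ : G₁.edgeSet := ⟨s(v₀, u₀), he₀⟩ with he₀def
  -- eccentricities
  have ecc_w : ∀ w : V₂, ecc H (Sum.inr w) = 2 := by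
    intro w
    apply le_antisymm
    · apply Finset.sup_le
      intro y _
      rcases y with (v | e) | w'
      · calc H.dist (Sum.inr w) (Sum.inl (Sum.inl v)) = 1 := by
              rw [SimpleGraph.dist_comm]; exact dist_vw v w
          _ ≤ 2 := by omega
      · rw [SimpleGraph.dist_comm, dist_ew]
      · rcases eq_or_ne w w' with rfl | hne
        · rw [SimpleGraph.dist_self]; omega
        · rcases Classical.em (G₂.Adj w w') with ha | hna
          · rw [SimpleGraph.dist_eq_one_iff_adj.mpr ((adj_ww w w').mpr ha)]; omega
          · rw [dist_ww w w' hne hna]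
    · calc (2 : ℕ) = H.dist (Sum.inr w) (Sum.inl (Sum.inr e₀)) := by
            rw [SimpleGraph.dist_comm, dist_ew]
        _ ≤ _ := Finset.le_sup (Finset.mem_univ _)
  have ecc_v_ge : ∀ v : V₁, 2 ≤ ecc H (Sum.inl (Sum.inl v)) := by
    intro v
    obtain ⟨u, hu⟩ := hnbr v
    calc (2 : ℕ) = H.dist (Sum.inl (Sum.inl v)) (Sum.inl (Sum.inl u)) :=
          (dist_vv v u hu.ne).symm
      _ ≤ _ := Finset.le_sup (Finset.mem_univ _)
  have ecc_e_ge : ∀ e : G₁.edgeSet, 2 ≤ ecc H (Sum.inl (Sum.inr e)) := by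
    intro e
    calc (2 : ℕ) = H.dist (Sum.inl (Sum.inr e)) (Sum.inr w₀) := (dist_ew e w₀).symm
      _ ≤ _ := Finset.le_sup (Finset.mem_univ _)
  -- matrix entries
  have E1 : ∀ (v : V₁) (w : V₂), eccMatrix H (Sum.inl (Sum.inl v)) (Sum.inr w) = 0 := by
    intro v w
    have h2 : 2 ≤ min (ecc H (Sum.inl (Sum.inl v))) (ecc H (Sum.inr w)) :=
      le_min (ecc_v_ge v) (by rw [ecc_w w])
    simp only [eccMatrix]
    rw [dist_vw v w, if_neg (Nat.ne_of_lt (lt_of_lt_of_le one_lt_two h2))]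
  have E2 : ∀ (e : G₁.edgeSet) (w : V₂),
      eccMatrix H (Sum.inl (Sum.inr e)) (Sum.inr w) = 2 := by
    intro e w
    have hmin : min (ecc H (Sum.inl (Sum.inr e))) (ecc H (Sum.inr w)) = 2 := by
      rw [ecc_w w]; exact min_eq_right (ecc_e_ge e)
    simp only [eccMatrix]
    rw [dist_ew e w, hmin, if_pos rfl]
    norm_num
  have E3 : ∀ (w i : V₂), eccMatrix H (Sum.inr w) (Sum.inr i) =
      2 - (if i = w then 2 else 0) - 2 * (G₂.adjMatrix ℝ) w i := by
    intro w i
    have hmin : min (ecc H (Sum.inr w)) (ecc H (Sum.inr i)) = 2 := by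
      rw [ecc_w w, ecc_w i]; simp
    rcases eq_or_ne i w with rfl | hne
    · simp only [eccMatrix]
      rw [SimpleGraph.dist_self, hmin, if_neg (by omega)]
      simp [SimpleGraph.adjMatrix_apply, G₂.irrefl]
    · rcases Classical.em (G₂.Adj w i) with ha | hna
      · simp only [eccMatrix]
        rw [SimpleGraph.dist_eq_one_iff_adj.mpr ((adj_ww w i).mpr ha), hmin, if_neg (by omega)]
        simp [SimpleGraph.adjMatrix_apply, ha, hne]
      · simp only [eccMatrix]
        rw [dist_ww w i (Ne.symm hne) hna, hmin, if_pos rfl]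
        simp [SimpleGraph.adjMatrix_apply, hna, hne]
  -- the eigenvector
  refine ⟨Sum.elim (0 : V₁ ⊕ G₁.edgeSet → ℝ) W, ?_, ?_⟩
  · intro h
    apply hW
    funext i
    have := congrFun h (Sum.inr i)
    simpa using this
  · funext x
    rcases x with (v | e) | w
    · simp only [Matrix.mulVec, dotProduct]
      rw [Fintype.sum_sum_type]
      have h1 : ∀ a : V₁ ⊕ G₁.edgeSet,
          eccMatrix H (Sum.inl (Sum.inl v)) (Sum.inl a) * Sum.elim (0 : V₁ ⊕ G₁.edgeSet → ℝ) W (Sum.inl a) = 0 := by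
        intro a; simp
      have h2' : ∀ i : V₂,
          eccMatrix H (Sum.inl (Sum.inl v)) (Sum.inr i) * Sum.elim (0 : V₁ ⊕ G₁.edgeSet → ℝ) W (Sum.inr i) = 0 := by
        intro i; rw [E1]; ring
      rw [Finset.sum_congr rfl (fun a _ => h1 a), Finset.sum_congr rfl (fun i _ => h2' i)]
      simp
    · simp only [Matrix.mulVec, dotProduct]
      rw [Fintype.sum_sum_type]
      have h1 : ∀ a : V₁ ⊕ G₁.edgeSet,
          eccMatrix H (Sum.inl (Sum.inr e)) (Sum.inl a) * Sum.elim (0 : V₁ ⊕ G₁.edgeSet → ℝ) W (Sum.inl a) = 0 := by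
        intro a; simp
      rw [Finset.sum_congr rfl (fun a _ => h1 a), Finset.sum_const_zero]
      have h2 : ∀ i : V₂,
          eccMatrix H (Sum.inl (Sum.inr e)) (Sum.inr i) * Sum.elim (0 : V₁ ⊕ G₁.edgeSet → ℝ) W (Sum.inr i) = 2 * W i := by
        intro i; rw [E2]; simp
      rw [Finset.sum_congr rfl (fun i _ => h2 i), ← Finset.mul_sum, horth]
      simp
    · simp only [Matrix.mulVec, dotProduct]
      rw [Fintype.sum_sum_type]
      have h1 : ∀ a : V₁ ⊕ G₁.edgeSet,
          eccMatrix H (Sum.inr w) (Sum.inl a) * Sum.elim (0 : V₁ ⊕ G₁.edgeSet → ℝ) W (Sum.inl a) = 0 := by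
        intro a; simp
      rw [Finset.sum_congr rfl (fun a _ => h1 a), Finset.sum_const_zero, zero_add]
      have h2 : ∀ i : V₂, eccMatrix H (Sum.inr w) (Sum.inr i) * Sum.elim (0 : V₁ ⊕ G₁.edgeSet → ℝ) W (Sum.inr i) =
          2 * W i - (if i = w then 2 * W i else 0) - 2 * ((G₂.adjMatrix ℝ) w i * W i) := by
        intro i
        rw [E3]
        simp only [Sum.elim_inr]
        split_ifs <;> ring
      rw [Finset.sum_congr rfl (fun i _ => h2 i)]
      rw [Finset.sum_sub_distrib, Finset.sum_sub_distrib, ← Finset.mul_sum, horth,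
        Finset.sum_ite_eq' Finset.univ w (fun i => 2 * W i), ← Finset.mul_sum]
      have hA : ∑ i, (G₂.adjMatrix ℝ) w i * W i = β * W w := by
        have := congrFun hev w
        simpa [Matrix.mulVec, dotProduct] using this
      rw [hA]
      simp only [Finset.mem_univ, if_pos, Pi.smul_apply, Sum.elim_inr, smul_eq_mul]
      ring
end

section
/- Let G₁ be r₁-regular with r₁ ≥ 2, p₁ vertices and q₁ edges, and G₂ regular with p₂ vertices. Then 0 is an eigenvalue of the eccentricity matrix of the subdivision-edge join G₁ ⊻ G₂ with multiplicity at least q₁ − p₁. -/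
open SimpleGraph Matrix Finset

attribute [local instance] Fintype.ofFinite Classical.propDecidable

set_option linter.unusedSectionVars false
set_option linter.unnecessarySimpa false
set_option linter.unusedVariables false
set_option linter.unreachableTactic false
set_option linter.unusedTactic false

section aux
variable {V₁ V₂ : Type*} [Fintype V₁] [Fintype V₂] {G₁ : SimpleGraph V₁} {G₂ : SimpleGraph V₂}

lemma adj_ve {v : V₁} {e : G₁.edgeSet} (h : v ∈ (e : Sym2 V₁)) :
    (subEdgeJoin G₁ G₂).Adj (Sum.inl (Sum.inl v)) (Sum.inl (Sum.inr e)) := by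
  simp [subEdgeJoin, SimpleGraph.fromRel_adj, h]

lemma adj_ew (e : G₁.edgeSet) (w : V₂) :
    (subEdgeJoin G₁ G₂).Adj (Sum.inl (Sum.inr e)) (Sum.inr w) := by
  simp [subEdgeJoin, SimpleGraph.fromRel_adj]

lemma exists_incident {r : ℕ} (hr : G₁.IsRegularOfDegree r) (hr2 : 1 ≤ r) (v : V₁) :
    ∃ f : G₁.edgeSet, v ∈ (f : Sym2 V₁) := by
  obtain ⟨u, hu⟩ : ∃ u, G₁.Adj v u := by
    rw [← SimpleGraph.degree_pos_iff_exists_adj, hr v]; omega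
  exact ⟨⟨s(v,u), hu⟩, by simp⟩

lemma exists_adj_ne {r : ℕ} (hr : G₁.IsRegularOfDegree r) (hr2 : 2 ≤ r) (a b : V₁) :
    ∃ c, G₁.Adj a c ∧ c ≠ b := by
  have hcard : 1 < (G₁.neighborFinset a).card := by
    have := hr a; rw [SimpleGraph.degree] at this; omega
  obtain ⟨c, hc, hcb⟩ := Finset.exists_mem_ne hcard b
  exact ⟨c, (SimpleGraph.mem_neighborFinset _ _ _).1 hc, hcb⟩

lemma exists_avoiding {r : ℕ} (hr : G₁.IsRegularOfDegree r) (hr2 : 2 ≤ r) (v : V₁) :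
    ∃ f : G₁.edgeSet, v ∉ (f : Sym2 V₁) := by
  obtain ⟨u, hu⟩ : ∃ u, G₁.Adj v u := by
    rw [← SimpleGraph.degree_pos_iff_exists_adj, hr v]; omega
  obtain ⟨c, hc, hcv⟩ := exists_adj_ne hr hr2 u v
  refine ⟨⟨s(u,c), hc⟩, ?_⟩
  simp only [Sym2.mem_iff]
  push_neg
  exact ⟨fun h => G₁.irrefl (h ▸ hu), fun h => hcv h.symm⟩

lemma exists_avoiding' {r : ℕ} (hr : G₁.IsRegularOfDegree r) (hr2 : 2 ≤ r) (e : G₁.edgeSet) :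
    ∃ v : V₁, v ∉ (e : Sym2 V₁) := by
  obtain ⟨s, hs⟩ := e
  induction s with
  | _ a b =>
    have hab : G₁.Adj a b := hs
    obtain ⟨c, hc, hcb⟩ := exists_adj_ne hr hr2 a b
    refine ⟨c, ?_⟩
    simp only [Sym2.mem_iff]
    push_neg
    exact ⟨fun h => G₁.irrefl (h ▸ hc), hcb⟩

variable [Nonempty V₂]

lemma dist_ve_of_notMem {r : ℕ} (hr : G₁.IsRegularOfDegree r) (hr2 : 2 ≤ r)
    {v : V₁} {e : G₁.edgeSet} (h : v ∉ (e : Sym2 V₁)) :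
    (subEdgeJoin G₁ G₂).dist (Sum.inl (Sum.inl v)) (Sum.inl (Sum.inr e)) = 3 := by
  obtain ⟨f, hf⟩ := exists_incident hr (by omega) v
  obtain ⟨w₀⟩ := ‹Nonempty V₂›
  set M := subEdgeJoin G₁ G₂ with hM
  have hle : M.dist (Sum.inl (Sum.inl v)) (Sum.inl (Sum.inr e)) ≤ 3 := by
    refine le_trans (SimpleGraph.dist_le
      (Walk.cons (adj_ve hf) (Walk.cons (adj_ew f w₀) (Walk.cons (adj_ew e w₀).symm Walk.nil)))) (by simp)
  have h0 : M.dist (Sum.inl (Sum.inl v)) (Sum.inl (Sum.inr e)) ≠ 0 := by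
    rw [SimpleGraph.dist_ne_zero_iff_ne_and_reachable]
    exact ⟨by simp, ⟨Walk.cons (adj_ve hf)
      (Walk.cons (adj_ew f w₀) (Walk.cons (adj_ew e w₀).symm Walk.nil))⟩⟩
  have h1 : M.dist (Sum.inl (Sum.inl v)) (Sum.inl (Sum.inr e)) ≠ 1 := by
    intro hd
    rw [SimpleGraph.dist_eq_one_iff_adj] at hd
    exact h (by simpa [hM, subEdgeJoin, SimpleGraph.fromRel_adj] using hd)
  have h2 : M.dist (Sum.inl (Sum.inl v)) (Sum.inl (Sum.inr e)) ≠ 2 := by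
    intro hd
    obtain ⟨q, hq⟩ := SimpleGraph.exists_walk_of_dist_ne_zero h0
    rw [hd] at hq
    cases q with
    | @cons _ m _ ha q' =>
      cases q' with
      | nil => simp at hq
      | @cons _ c _ hb q'' =>
        have hlen : q''.length = 0 := by simpa using hq
        obtain rfl := q''.eq_of_length_eq_zero hlen
        rcases m with (x|y)|z
        · exact (by simpa [hM, subEdgeJoin, SimpleGraph.fromRel_adj] using ha : False)
        · exact (by simpa [hM, subEdgeJoin, SimpleGraph.fromRel_adj] using hb : False)
        · exact (by simpa [hM, subEdgeJoin, SimpleGraph.fromRel_adj] using ha : False)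
  omega

lemma dist_ee_le (e f : G₁.edgeSet) :
    (subEdgeJoin G₁ G₂).dist (Sum.inl (Sum.inr e)) (Sum.inl (Sum.inr f)) ≤ 2 := by
  obtain ⟨w₀⟩ := ‹Nonempty V₂›
  refine le_trans (SimpleGraph.dist_le
    (Walk.cons (adj_ew e w₀) (Walk.cons (adj_ew f w₀).symm Walk.nil))) (by simp)

lemma dist_ew (e : G₁.edgeSet) (w : V₂) :
    (subEdgeJoin G₁ G₂).dist (Sum.inl (Sum.inr e)) (Sum.inr w) = 1 :=
  SimpleGraph.dist_eq_one_iff_adj.mpr (adj_ew e w)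

lemma dist_wv_ge {r : ℕ} (hr : G₁.IsRegularOfDegree r) (hr2 : 2 ≤ r) (w : V₂) (v : V₁) :
    2 ≤ (subEdgeJoin G₁ G₂).dist (Sum.inr w) (Sum.inl (Sum.inl v)) := by
  obtain ⟨f, hf⟩ := exists_incident hr (by omega) v
  have h0 : (subEdgeJoin G₁ G₂).dist (Sum.inr w) (Sum.inl (Sum.inl v)) ≠ 0 := by
    rw [SimpleGraph.dist_ne_zero_iff_ne_and_reachable]
    exact ⟨by simp, ⟨Walk.cons (adj_ew f w).symm (Walk.cons (adj_ve hf).symm Walk.nil)⟩⟩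
  have h1 : (subEdgeJoin G₁ G₂).dist (Sum.inr w) (Sum.inl (Sum.inl v)) ≠ 1 := by
    intro hd
    rw [SimpleGraph.dist_eq_one_iff_adj] at hd
    exact (by simpa [subEdgeJoin, SimpleGraph.fromRel_adj] using hd : False)
  omega

lemma ecc_e {r : ℕ} (hr : G₁.IsRegularOfDegree r) (hr2 : 2 ≤ r) (e : G₁.edgeSet) :
    ecc (subEdgeJoin G₁ G₂) (Sum.inl (Sum.inr e)) = 3 := by
  apply le_antisymm
  · apply Finset.sup_le
    rintro ((v|f)|w) _
    · by_cases hv : v ∈ (e : Sym2 V₁)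
      · rw [SimpleGraph.dist_comm]
        rw [SimpleGraph.dist_eq_one_iff_adj.mpr (adj_ve hv)]; omega
      · rw [SimpleGraph.dist_comm, dist_ve_of_notMem hr hr2 hv]
    · exact le_trans (dist_ee_le e f) (by omega)
    · rw [dist_ew]; omega
  · obtain ⟨v, hv⟩ := exists_avoiding' hr hr2 e
    calc (3:ℕ) = (subEdgeJoin G₁ G₂).dist (Sum.inl (Sum.inr e)) (Sum.inl (Sum.inl v)) := by
          rw [SimpleGraph.dist_comm, dist_ve_of_notMem hr hr2 hv]
      _ ≤ _ := Finset.le_sup (Finset.mem_univ _)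

lemma ecc_v_ge {r : ℕ} (hr : G₁.IsRegularOfDegree r) (hr2 : 2 ≤ r) (v : V₁) :
    3 ≤ ecc (subEdgeJoin G₁ G₂) (Sum.inl (Sum.inl v)) := by
  obtain ⟨f, hf⟩ := exists_avoiding hr hr2 v
  calc (3:ℕ) = (subEdgeJoin G₁ G₂).dist (Sum.inl (Sum.inl v)) (Sum.inl (Sum.inr f)) :=
        (dist_ve_of_notMem hr hr2 hf).symm
    _ ≤ _ := Finset.le_sup (Finset.mem_univ _)

lemma ecc_w_ge {r : ℕ} (hr : G₁.IsRegularOfDegree r) (hr2 : 2 ≤ r) (w : V₂) (v : V₁) :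
    2 ≤ ecc (subEdgeJoin G₁ G₂) (Sum.inr w) :=
  le_trans (dist_wv_ge hr hr2 w v) (Finset.le_sup (Finset.mem_univ _))

lemma colE_vertex {r : ℕ} (hr : G₁.IsRegularOfDegree r) (hr2 : 2 ≤ r)
    (v : V₁) (e : G₁.edgeSet) :
    eccMatrix (subEdgeJoin G₁ G₂) (Sum.inl (Sum.inl v)) (Sum.inl (Sum.inr e)) =
      if v ∈ (e : Sym2 V₁) then 0 else 3 := by
  have hmin : min (ecc (subEdgeJoin G₁ G₂) (Sum.inl (Sum.inl v)))
      (ecc (subEdgeJoin G₁ G₂) (Sum.inl (Sum.inr e))) = 3 := by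
    have h1 := ecc_v_ge (G₂ := G₂) hr hr2 v
    have h2 := ecc_e (G₂ := G₂) hr hr2 e
    omega
  by_cases hv : v ∈ (e : Sym2 V₁)
  · have hd : (subEdgeJoin G₁ G₂).dist (Sum.inl (Sum.inl v)) (Sum.inl (Sum.inr e)) = 1 :=
      SimpleGraph.dist_eq_one_iff_adj.mpr (adj_ve hv)
    rw [eccMatrix, if_pos hv, if_neg (by omega)]
  · have hd := dist_ve_of_notMem (G₂ := G₂) hr hr2 hv
    rw [eccMatrix, if_neg hv, if_pos (by omega), hd]
    norm_num

lemma colE_edge {r : ℕ} (hr : G₁.IsRegularOfDegree r) (hr2 : 2 ≤ r)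
    (f e : G₁.edgeSet) :
    eccMatrix (subEdgeJoin G₁ G₂) (Sum.inl (Sum.inr f)) (Sum.inl (Sum.inr e)) = 0 := by
  have hd := dist_ee_le (G₂ := G₂) f e
  have h1 := ecc_e (G₂ := G₂) hr hr2 f
  have h2 := ecc_e (G₂ := G₂) hr hr2 e
  rw [eccMatrix, if_neg (by omega)]

lemma colE_w {r : ℕ} (hr : G₁.IsRegularOfDegree r) (hr2 : 2 ≤ r)
    (w : V₂) (e : G₁.edgeSet) :
    eccMatrix (subEdgeJoin G₁ G₂) (Sum.inr w) (Sum.inl (Sum.inr e)) = 0 := by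
  have hv : V₁ := ((e : Sym2 V₁)).out.1
  have hd : (subEdgeJoin G₁ G₂).dist (Sum.inr w) (Sum.inl (Sum.inr e)) = 1 := by
    rw [SimpleGraph.dist_comm]; exact dist_ew e w
  have h1 := ecc_w_ge (G₁ := G₁) (G₂ := G₂) hr hr2 w hv
  have h2 := ecc_e (G₂ := G₂) hr hr2 e
  rw [eccMatrix, if_neg (by omega)]

lemma sum_indicator_edge (e : G₁.edgeSet) :
    ∑ v : V₁, (if v ∈ (e : Sym2 V₁) then (1:ℝ) else 0) = 2 := by
  obtain ⟨s, hs⟩ := e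
  induction s with
  | _ a b =>
    have hab : a ≠ b := fun h => G₁.irrefl (h ▸ hs)
    have key : ∀ v : V₁, (if v ∈ (↑(⟨s(a,b),hs⟩ : G₁.edgeSet) : Sym2 V₁) then (1:ℝ) else 0) =
        (if v = a then 1 else 0) + (if v = b then 1 else 0) := by
      intro v
      by_cases h1 : v = a <;> by_cases h2 : v = b <;>
        simp_all [Sym2.mem_iff]
    rw [Finset.sum_congr rfl (fun v _ => key v), Finset.sum_add_distrib]
    simp
    norm_num
end aux

/-- For `r₁`-regular `G₁` (`r₁ ≥ 2`, `p₁` vertices, `q₁` edges) and regular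
`G₂`, `0` is an eigenvalue of `ε(G₁ ⊻ G₂)` with multiplicity at least `q₁ - p₁`. -/
theorem stmt9 {V₁ V₂ : Type*} [Fintype V₁] [Fintype V₂]
    (G₁ : SimpleGraph V₁) (G₂ : SimpleGraph V₂) (r₁ r₂ : ℕ)
    (h₁ : G₁.Connected) (h₂ : G₂.Connected)
    (hr₁ : G₁.IsRegularOfDegree r₁) (hr₁2 : 2 ≤ r₁)
    (hr₂ : G₂.IsRegularOfDegree r₂) :
    Fintype.card G₁.edgeSet - Fintype.card V₁ ≤
      Module.finrank ℝ (eigSpace (eccMatrix (subEdgeJoin G₁ G₂)) 0) := by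
  classical
  haveI : Nonempty V₂ := h₂.nonempty
  let L : (G₁.edgeSet → ℝ) →ₗ[ℝ] (V₁ → ℝ) := (incMat G₁).mulVecLin
  let φ : (G₁.edgeSet → ℝ) →ₗ[ℝ] (((V₁ ⊕ G₁.edgeSet) ⊕ V₂) → ℝ) :=
    { toFun := fun x => Sum.elim (Sum.elim 0 x) 0
      map_add' := by intro x y; funext u; rcases u with (v|e)|w <;> simp
      map_smul' := by intro c x; funext u; rcases u with (v|e)|w <;> simp }
  have hinj : Function.Injective φ := by
    intro x y hxy; funext e; exact congrFun hxy (Sum.inl (Sum.inr e))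
  have hmem : ∀ x ∈ LinearMap.ker L, φ x ∈ eigSpace (eccMatrix (subEdgeJoin G₁ G₂)) 0 := by
    intro x hx
    rw [LinearMap.mem_ker] at hx
    have hxv : ∀ v, ∑ e : G₁.edgeSet, (if v ∈ (e : Sym2 V₁) then (1:ℝ) else 0) * x e = 0 := by
      intro v
      have h := congrFun hx v
      simpa [L, incMat, Matrix.mulVec, dotProduct] using h
    have hsum : ∑ e : G₁.edgeSet, x e = 0 := by
      have h2 : ∑ v : V₁, ∑ e : G₁.edgeSet,
          (if v ∈ (e : Sym2 V₁) then (1:ℝ) else 0) * x e = 0 :=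
        Finset.sum_eq_zero (fun v _ => hxv v)
      rw [Finset.sum_comm] at h2
      have h3 : ∀ e : G₁.edgeSet, ∑ v : V₁,
          (if v ∈ (e : Sym2 V₁) then (1:ℝ) else 0) * x e = 2 * x e := by
        intro e; rw [← Finset.sum_mul, sum_indicator_edge]
      rw [Finset.sum_congr rfl (fun e _ => h3 e), ← Finset.mul_sum] at h2
      linarith
    simp only [eigSpace, LinearMap.mem_ker, LinearMap.sub_apply, Matrix.mulVecLin_apply,
      LinearMap.smul_apply, LinearMap.id_apply, zero_smul, sub_zero]
    funext u
    have expand : (eccMatrix (subEdgeJoin G₁ G₂)).mulVec (φ x) u =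
        ∑ e : G₁.edgeSet, eccMatrix (subEdgeJoin G₁ G₂) u (Sum.inl (Sum.inr e)) * x e := by
      simp [Matrix.mulVec, dotProduct, Fintype.sum_sum_type, φ]
    show (eccMatrix (subEdgeJoin G₁ G₂)).mulVec (φ x) u = 0
    rw [expand]
    rcases u with (v|f)|w
    · rw [Finset.sum_congr rfl (fun e _ => by rw [colE_vertex hr₁ hr₁2 v e])]
      have key : ∀ e : G₁.edgeSet, (if v ∈ (e : Sym2 V₁) then (0:ℝ) else 3) * x e
          = 3 * x e - 3 * ((if v ∈ (e : Sym2 V₁) then (1:ℝ) else 0) * x e) := by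
        intro e; by_cases hv : v ∈ (e : Sym2 V₁) <;> simp [hv] <;> ring
      rw [Finset.sum_congr rfl (fun e _ => key e), Finset.sum_sub_distrib, ← Finset.mul_sum,
        ← Finset.mul_sum, hsum, hxv v]
      ring
    · rw [Finset.sum_congr rfl (fun e _ => by rw [colE_edge hr₁ hr₁2 f e])]; simp
    · rw [Finset.sum_congr rfl (fun e _ => by rw [colE_w hr₁ hr₁2 w e])]; simp
  have hker : Fintype.card G₁.edgeSet - Fintype.card V₁ ≤
      Module.finrank ℝ (LinearMap.ker L) := by
    have h1 := LinearMap.finrank_range_add_finrank_ker L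
    have h2 : Module.finrank ℝ (LinearMap.range L) ≤ Fintype.card V₁ := by
      have h := Submodule.finrank_le (LinearMap.range L)
      rwa [Module.finrank_fintype_fun_eq_card] at h
    rw [Module.finrank_fintype_fun_eq_card] at h1
    omega
  have heq : Module.finrank ℝ (LinearMap.ker L) =
      Module.finrank ℝ (Submodule.map φ (LinearMap.ker L)) :=
    (Submodule.equivMapOfInjective φ hinj _).finrank_eq
  have hle : Submodule.map φ (LinearMap.ker L) ≤ eigSpace (eccMatrix (subEdgeJoin G₁ G₂)) 0 := by
    rintro _ ⟨x, hx, rfl⟩; exact hmem x hx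
  calc Fintype.card G₁.edgeSet - Fintype.card V₁ ≤ Module.finrank ℝ (LinearMap.ker L) := hker
    _ = Module.finrank ℝ (Submodule.map φ (LinearMap.ker L)) := heq
    _ ≤ Module.finrank ℝ (eigSpace (eccMatrix (subEdgeJoin G₁ G₂)) 0) :=
        Submodule.finrank_mono hle
end
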